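/- arXiv:1104.0136 — 4 statements merged into one kernel-verified Lean document; each statement's English description precedes it below -/
import Mathlib

section
/- Let n, m, Δ be natural numbers and let A and B be independent random matrices taking values in F_2^{(n+Δ)×m}, defined on a finite (discrete) probability space. Then H(A ⊕ S^Δ B) − 2·H(S^Δ A ⊕ S^Δ B) ≤ m · Δ, where H denotes Shannon entropy with logarithm base 2 and ⊕ is entrywise addition modulo 2. -/
/-- Down-shift operator `S^Δ` on matrices over `F₂`: shifts rows down by `Δ`,
filling the top `Δ` rows with zeros. -/
def shiftS (Δ : ℕ) {r c : ℕ} (X : Matrix (Fin r) (Fin c) (ZMod 2)) :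
    Matrix (Fin r) (Fin c) (ZMod 2) :=
  fun i j => if _h : Δ ≤ (i : ℕ) then
      X ⟨(i : ℕ) - Δ, lt_of_le_of_lt (Nat.sub_le _ _) i.isLt⟩ j
    else 0

/-- The function `φ(p,q)`: with `l = p div q` (convention `p div 0 = 0`),
`φ(p,q) = q + l·q/2` for `l` even, `φ(p,q) = p − (l−1)·q/2` for `l` odd. -/
def phi (p q : ℕ) : ℕ :=
  if Even (p / q) then q + (p / q / 2) * q else p - ((p / q - 1) / 2) * q

/-- Probability that the random variable `f` takes the value `a`, for the
discrete probability mass function `p`. -/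
noncomputable def prEq {Ω α : Type*} [Fintype Ω] [DecidableEq α]
    (p : Ω → ℝ) (f : Ω → α) (a : α) : ℝ :=
  ∑ ω ∈ Finset.univ.filter (fun ω => f ω = a), p ω

/-- Shannon entropy (base 2) of the random variable `f` under the pmf `p`. -/
noncomputable def entropy2 {Ω α : Type*} [Fintype Ω] [Fintype α] [DecidableEq α]
    (p : Ω → ℝ) (f : Ω → α) : ℝ :=
  -∑ a : α, prEq p f a * Real.logb 2 (prEq p f a)

/-- Independence of two random variables under the pmf `p`. -/
def IndepRV {Ω α β : Type*} [Fintype Ω] [DecidableEq α] [DecidableEq β]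
    (p : Ω → ℝ) (f : Ω → α) (g : Ω → β) : Prop :=
  ∀ a b, prEq p (fun ω => (f ω, g ω)) (a, b) = prEq p f a * prEq p g b

/-- Mutual independence of three random variables under the pmf `p`. -/
def MutIndep3 {Ω α β γ : Type*} [Fintype Ω] [DecidableEq α] [DecidableEq β]
    [DecidableEq γ] (p : Ω → ℝ) (f : Ω → α) (g : Ω → β) (h : Ω → γ) : Prop :=
  ∀ a b c, prEq p (fun ω => (f ω, g ω, h ω)) (a, b, c)
      = prEq p f a * prEq p g b * prEq p h c

/-- Mutual information (base 2) `I(f; g) = H(f) + H(g) − H(f, g)`. -/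
noncomputable def mutInfo2 {Ω α β : Type*} [Fintype Ω] [Fintype α] [Fintype β]
    [DecidableEq α] [DecidableEq β] (p : Ω → ℝ) (f : Ω → α) (g : Ω → β) : ℝ :=
  entropy2 p f + entropy2 p g - entropy2 p (fun ω => (f ω, g ω))

/-- Number of ones in a vector over `F₂`. -/
def wt {n : ℕ} (a : Fin n → ZMod 2) : ℕ :=
  (Finset.univ.filter (fun i => a i = 1)).card

/-- `γ1(a)`: complement of `a` stacked over the all-ones vector of length `Δ`. -/
def gamma1 (Δ : ℕ) {nM : ℕ} (a : Fin nM → ZMod 2) : Fin (nM + Δ) → ZMod 2 :=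
  fun i => if h : (i : ℕ) < nM then 1 - a ⟨(i : ℕ), h⟩ else 1

/-- `γ2(a)`: the zero vector of length `Δ` stacked over the complement of `a`. -/
def gamma2 (Δ : ℕ) {nM : ℕ} (a : Fin nM → ZMod 2) : Fin (nM + Δ) → ZMod 2 :=
  fun i => if _h : Δ ≤ (i : ℕ) then
      1 - a ⟨(i : ℕ) - Δ, by have := i.isLt; omega⟩
    else 0

/-- The overlap `γ1(a)^T γ2(a)`: number of positions where both are one. -/
def overlap (Δ : ℕ) {nM : ℕ} (a : Fin nM → ZMod 2) : ℕ :=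
  (Finset.univ.filter (fun i => gamma1 Δ a i = 1 ∧ gamma2 Δ a i = 1)).card

/-- `ρ(x)`: minimal overlap over all vectors `a ∈ F₂^{n_M}` with `|a| = x`. -/
noncomputable def rho (Δ nM x : ℕ) : ℕ :=
  sInf (overlap Δ '' {a : Fin nM → ZMod 2 | wt a = x})


/-!
Write `U = S^Δ A`, `V = S^Δ B`. Over `F₂` we have `A + V = (U + V) + (A + U)`, so
`H(A + V) ≤ H(U + V) + H(A + U) ≤ H(U + V) + H(A)`. The matrix `A` is recovered from `U`
together with the `Δ` bottom rows that the shift discards, which carry at most `m Δ` bits,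
so `H(A) ≤ H(U) + m Δ`. Finally `U` and `V` are independent, hence
`H(U) = H(U, V) - H(V) ≤ H(U + V, V) - H(V) ≤ H(U + V)`.
-/

open Finset Real

/-- Gibbs' inequality. -/
theorem sum_mul_log_le_sum_mul_log_self {ι : Type*} (s : Finset ι) {P Q : ι → ℝ}
    (hP : ∀ i ∈ s, 0 ≤ P i) (hQ : ∀ i ∈ s, 0 ≤ Q i) (hPQ : ∀ i ∈ s, 0 < P i → 0 < Q i)
    (hsum : ∑ i ∈ s, Q i ≤ ∑ i ∈ s, P i) :
    ∑ i ∈ s, P i * log (Q i) ≤ ∑ i ∈ s, P i * log (P i) := by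
  suffices h : ∀ i ∈ s, P i * log (Q i) - P i * log (P i) ≤ Q i - P i by
    have := sum_le_sum h
    rw [sum_sub_distrib, sum_sub_distrib] at this
    linarith
  intro i hi
  rcases (hP i hi).eq_or_lt with hPi | hPi
  · simpa [← hPi] using hQ i hi
  have hQi := hPQ i hi hPi
  calc P i * log (Q i) - P i * log (P i) = P i * log (Q i / P i) := by
        rw [log_div hQi.ne' hPi.ne']; ring
    _ ≤ P i * (Q i / P i - 1) := by gcongr; exact log_le_sub_one_of_pos (by positivity)
    _ = Q i - P i := by field_simp

section Entropy

variable {Ω α β : Type*} [Fintype Ω] [DecidableEq α] [DecidableEq β] {p : Ω → ℝ}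

lemma prEq_nonneg (hp : ∀ ω, 0 ≤ p ω) (f : Ω → α) (a : α) : 0 ≤ prEq p f a :=
  sum_nonneg fun ω _ => hp ω

lemma prEq_le_prEq_comp (hp : ∀ ω, 0 ≤ p ω) (f : Ω → α) (e : α → β) (a : α) :
    prEq p f a ≤ prEq p (fun ω => e (f ω)) (e a) :=
  sum_le_sum_of_subset_of_nonneg (fun ω => by simp_all) fun ω _ _ => hp ω

lemma sum_prEq_mul [Fintype α] (p : Ω → ℝ) (f : Ω → α) (φ : α → ℝ) :
    ∑ a, prEq p f a * φ a = ∑ ω, p ω * φ (f ω) := by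
  simp only [prEq, sum_mul]
  rw [← sum_fiberwise univ f fun ω => p ω * φ (f ω)]
  refine sum_congr rfl fun a _ => sum_congr rfl fun ω hω => ?_
  rw [(mem_filter.mp hω).2]

lemma sum_prEq [Fintype α] (hsum : ∑ ω, p ω = 1) (f : Ω → α) : ∑ a, prEq p f a = 1 := by
  simpa [hsum] using sum_prEq_mul p f fun _ => 1

lemma prEq_comp [Fintype α] (p : Ω → ℝ) (f : Ω → α) (e : α → β) (b : β) :
    prEq p (fun ω => e (f ω)) b = ∑ a with e a = b, prEq p f a := by
  unfold prEq
  rw [← sum_fiberwise_of_maps_to (g := f) (t := {a | e a = b}) fun ω hω => by simpa using hω]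
  refine sum_congr rfl fun a ha => sum_congr ?_ fun _ _ => rfl
  ext ω
  simp only [mem_filter, mem_univ, true_and] at ha ⊢
  exact ⟨And.right, fun hω => ⟨hω ▸ ha, hω⟩⟩

lemma IndepRV.comp {α' β' : Type*} [Fintype α] [Fintype β] [DecidableEq α'] [DecidableEq β']
    {f : Ω → α} {g : Ω → β} (h : IndepRV p f g) (e : α → α') (u : β → β') :
    IndepRV p (fun ω => e (f ω)) (fun ω => u (g ω)) := by
  intro a b
  have hfiber : ({z | (e z.1, u z.2) = (a, b)} : Finset (α × β))
      = ({x | e x = a} : Finset α) ×ˢ ({y | u y = b} : Finset β) := by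
    ext; simp [Prod.ext_iff]
  rw [prEq_comp p (fun ω => (f ω, g ω)) (fun z => (e z.1, u z.2)), hfiber, sum_product,
    prEq_comp p f e, prEq_comp p g u, sum_mul_sum]
  exact sum_congr rfl fun x _ => sum_congr rfl fun y _ => h x y

lemma entropy2_eq [Fintype α] (p : Ω → ℝ) (f : Ω → α) :
    entropy2 p f = -(∑ a, prEq p f a * log (prEq p f a)) / log 2 := by
  simp only [entropy2, logb, neg_div, sum_div, mul_div_assoc]

lemma entropy2_le_of_eq_comp [Fintype α] [Fintype β] (hp : ∀ ω, 0 ≤ p ω) {f : Ω → β}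
    (e : α → β) (g : Ω → α) (h : ∀ ω, f ω = e (g ω)) : entropy2 p f ≤ entropy2 p g := by
  obtain rfl : f = fun ω => e (g ω) := funext h
  rw [entropy2_eq, entropy2_eq]
  gcongr
  calc ∑ a, prEq p g a * log (prEq p g a)
      ≤ ∑ a, prEq p g a * log (prEq p (fun ω => e (g ω)) (e a)) := by
        refine sum_le_sum fun a _ => ?_
        rcases (prEq_nonneg hp g a).eq_or_lt with h0 | h0
        · simp [← h0]
        · gcongr
          exact prEq_le_prEq_comp hp g e a
    _ = ∑ b, prEq p (fun ω => e (g ω)) b * log (prEq p (fun ω => e (g ω)) b) := by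
        rw [sum_prEq_mul, sum_prEq_mul]

lemma sum_prEq_pair_mul_log_mul [Fintype α] [Fintype β] (hp : ∀ ω, 0 ≤ p ω) (f : Ω → α)
    (g : Ω → β) :
    ∑ z, prEq p (fun ω => (f ω, g ω)) z * log (prEq p f z.1 * prEq p g z.2)
      = ∑ a, prEq p f a * log (prEq p f a) + ∑ b, prEq p g b * log (prEq p g b) := by
  have hterm : ∀ z, prEq p (fun ω => (f ω, g ω)) z * log (prEq p f z.1 * prEq p g z.2)
      = prEq p (fun ω => (f ω, g ω)) z * log (prEq p f z.1)
        + prEq p (fun ω => (f ω, g ω)) z * log (prEq p g z.2) := by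
    intro z
    rcases (prEq_nonneg hp (fun ω => (f ω, g ω)) z).eq_or_lt with h0 | h0
    · simp [← h0]
    have hf : 0 < prEq p f z.1 :=
      h0.trans_le (prEq_le_prEq_comp hp (fun ω => (f ω, g ω)) Prod.fst z)
    have hg : 0 < prEq p g z.2 :=
      h0.trans_le (prEq_le_prEq_comp hp (fun ω => (f ω, g ω)) Prod.snd z)
    rw [log_mul hf.ne' hg.ne', mul_add]
  simp only [hterm, sum_add_distrib, sum_prEq_mul]

lemma entropy2_pair_le [Fintype α] [Fintype β] (hp : ∀ ω, 0 ≤ p ω) (hsum : ∑ ω, p ω = 1)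
    (f : Ω → α) (g : Ω → β) :
    entropy2 p (fun ω => (f ω, g ω)) ≤ entropy2 p f + entropy2 p g := by
  have hgibbs := sum_mul_log_le_sum_mul_log_self univ
    (P := prEq p (fun ω => (f ω, g ω))) (Q := fun z => prEq p f z.1 * prEq p g z.2)
    (fun z _ => prEq_nonneg hp _ z)
    (fun z _ => mul_nonneg (prEq_nonneg hp f z.1) (prEq_nonneg hp g z.2))
    (fun z _ h0 => mul_pos (h0.trans_le (prEq_le_prEq_comp hp _ Prod.fst z))
      (h0.trans_le (prEq_le_prEq_comp hp _ Prod.snd z)))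
    (by rw [Fintype.sum_prod_type, ← Fintype.sum_mul_sum, sum_prEq hsum, sum_prEq hsum,
      sum_prEq hsum, one_mul])
  rw [sum_prEq_pair_mul_log_mul hp] at hgibbs
  rw [entropy2_eq, entropy2_eq, entropy2_eq, ← add_div]
  gcongr
  linarith

lemma entropy2_pair_eq_of_indepRV [Fintype α] [Fintype β] (hp : ∀ ω, 0 ≤ p ω) {f : Ω → α}
    {g : Ω → β} (h : IndepRV p f g) :
    entropy2 p (fun ω => (f ω, g ω)) = entropy2 p f + entropy2 p g := by
  have hjoint : ∑ z, prEq p (fun ω => (f ω, g ω)) z * log (prEq p (fun ω => (f ω, g ω)) z)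
      = ∑ z, prEq p (fun ω => (f ω, g ω)) z * log (prEq p f z.1 * prEq p g z.2) :=
    sum_congr rfl fun z _ => by rw [← h z.1 z.2]
  rw [entropy2_eq, entropy2_eq, entropy2_eq, hjoint, sum_prEq_pair_mul_log_mul hp]
  ring

lemma entropy2_le_logb_card [Fintype α] [Nonempty α] (hp : ∀ ω, 0 ≤ p ω)
    (hsum : ∑ ω, p ω = 1) (f : Ω → α) : entropy2 p f ≤ logb 2 (Fintype.card α) := by
  have hcard : (0 : ℝ) < Fintype.card α := by exact_mod_cast Fintype.card_pos
  have hgibbs := sum_mul_log_le_sum_mul_log_self univ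
    (P := prEq p f) (Q := fun _ => (Fintype.card α : ℝ)⁻¹)
    (fun a _ => prEq_nonneg hp f a) (fun _ _ => by positivity) (fun _ _ _ => by positivity)
    (by simp [sum_prEq hsum, hcard.ne'])
  rw [← sum_mul, sum_prEq hsum, one_mul, log_inv] at hgibbs
  rw [entropy2_eq, logb]
  gcongr
  linarith

lemma entropy2_add_le [Fintype α] [Add α] (hp : ∀ ω, 0 ≤ p ω) (hsum : ∑ ω, p ω = 1)
    (f g : Ω → α) : entropy2 p (fun ω => f ω + g ω) ≤ entropy2 p f + entropy2 p g :=
  (entropy2_le_of_eq_comp hp (fun z : α × α => z.1 + z.2) (fun ω => (f ω, g ω)) fun _ => rfl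
    ).trans (entropy2_pair_le hp hsum f g)

lemma entropy2_le_entropy2_add_of_indepRV [Fintype α] [AddGroup α] (hp : ∀ ω, 0 ≤ p ω)
    (hsum : ∑ ω, p ω = 1) {f g : Ω → α} (h : IndepRV p f g) :
    entropy2 p f ≤ entropy2 p (fun ω => f ω + g ω) := by
  have hjoint := entropy2_pair_eq_of_indepRV hp h
  have hshear : entropy2 p (fun ω => (f ω, g ω)) ≤ entropy2 p (fun ω => (f ω + g ω, g ω)) :=
    entropy2_le_of_eq_comp hp (fun z => (z.1 - z.2, z.2)) (fun ω => (f ω + g ω, g ω))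
      fun ω => by simp
  have hsub := entropy2_pair_le hp hsum (fun ω => f ω + g ω) g
  linarith

end Entropy

lemma add_eq_add_add_add_of_charTwo {R ι κ : Type*} [Ring R] [CharP R 2]
    (X Y Z : Matrix ι κ R) : X + Z = (Y + Z) + (X + Y) := by
  have hY : Y + Y = 0 := by ext i j; exact CharTwo.add_self_eq_zero (Y i j)
  calc X + Z = X + Z + (Y + Y) := by rw [hY, add_zero]
    _ = (Y + Z) + (X + Y) := by abel

section Shift

variable {R : Type*} {n m Δ : ℕ}

def bottomRows (X : Matrix (Fin (n + Δ)) (Fin m) R) : Matrix (Fin Δ) (Fin m) R :=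
  fun k => X (Fin.natAdd n k)

def unshift (Y : Matrix (Fin (n + Δ)) (Fin m) R) (Z : Matrix (Fin Δ) (Fin m) R) :
    Matrix (Fin (n + Δ)) (Fin m) R :=
  Matrix.of fun i j => Fin.addCases (fun k => Y (k.addNat Δ) j) (fun k => Z k j) i

lemma unshift_shiftS_bottomRows (X : Matrix (Fin (n + Δ)) (Fin m) (ZMod 2)) :
    unshift (shiftS Δ X) (bottomRows X) = X := by
  ext i j
  induction i using Fin.addCases with
  | left i => simp [unshift, shiftS]; rfl
  | right k => simp [unshift, bottomRows]

lemma entropy2_le_entropy2_shiftS_add {Ω : Type*} [Fintype Ω] {p : Ω → ℝ}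
    (hp : ∀ ω, 0 ≤ p ω) (hsum : ∑ ω, p ω = 1) (A : Ω → Matrix (Fin (n + Δ)) (Fin m) (ZMod 2)) :
    entropy2 p A ≤ entropy2 p (fun ω => shiftS Δ (A ω)) + m * Δ := by
  have hbits : logb 2 (Fintype.card (Matrix (Fin Δ) (Fin m) (ZMod 2))) = m * Δ := by
    rw [Fintype.card_eq_nat_card]
    simp [Matrix, ← pow_mul, logb_pow]
  calc entropy2 p A
      ≤ entropy2 p (fun ω => (shiftS Δ (A ω), bottomRows (A ω))) :=
        entropy2_le_of_eq_comp hp (fun z => unshift z.1 z.2)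
          (fun ω => (shiftS Δ (A ω), bottomRows (A ω))) fun ω =>
          (unshift_shiftS_bottomRows (A ω)).symm
    _ ≤ entropy2 p (fun ω => shiftS Δ (A ω)) + entropy2 p (fun ω => bottomRows (A ω)) :=
        entropy2_pair_le hp hsum _ _
    _ ≤ entropy2 p (fun ω => shiftS Δ (A ω)) + m * Δ := by
        grw [entropy2_le_logb_card hp hsum (fun ω => bottomRows (A ω)), hbits]

end Shift

/-- Lemma 1, bound (14): for independent random matrices `A, B` with values in
`F₂^{(n+Δ)×m}`, `H(A ⊕ S^Δ B) − 2·H(S^Δ A ⊕ S^Δ B) ≤ m · Δ`. -/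
theorem entropy_shift_bound_delta {Ω : Type} [Fintype Ω] (n m Δ : ℕ)
    (p : Ω → ℝ) (hp : ∀ ω, 0 ≤ p ω) (hsum : ∑ ω, p ω = 1)
    (A B : Ω → Matrix (Fin (n + Δ)) (Fin m) (ZMod 2))
    (hAB : IndepRV p A B) :
    entropy2 p (fun ω => A ω + shiftS Δ (B ω))
      - 2 * entropy2 p (fun ω => shiftS Δ (A ω) + shiftS Δ (B ω))
      ≤ (m : ℝ) * (Δ : ℝ) := by
  set U := fun ω => shiftS Δ (A ω)
  set V := fun ω => shiftS Δ (B ω)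
  have hUV : IndepRV p U V := hAB.comp (shiftS Δ) (shiftS Δ)
  have hsplit : (fun ω => A ω + V ω) = fun ω => (U ω + V ω) + (A ω + U ω) :=
    funext fun ω => add_eq_add_add_add_of_charTwo (A ω) (U ω) (V ω)
  have hbound : entropy2 p (fun ω => A ω + V ω)
      ≤ entropy2 p (fun ω => U ω + V ω) + (entropy2 p (fun ω => U ω + V ω) + m * Δ) :=
    calc entropy2 p (fun ω => A ω + V ω)
        ≤ entropy2 p (fun ω => U ω + V ω) + entropy2 p (fun ω => A ω + U ω) := by
          rw [hsplit]; exact entropy2_add_le hp hsum _ _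
      _ ≤ entropy2 p (fun ω => U ω + V ω) + entropy2 p A := by
          grw [entropy2_le_of_eq_comp hp (fun X => X + shiftS Δ X) A fun _ => rfl]
      _ ≤ entropy2 p (fun ω => U ω + V ω) + (entropy2 p U + m * Δ) := by
          grw [entropy2_le_entropy2_shiftS_add hp hsum A]
      _ ≤ entropy2 p (fun ω => U ω + V ω) + (entropy2 p (fun ω => U ω + V ω) + m * Δ) := by
          grw [entropy2_le_entropy2_add_of_indepRV hp hsum hUV]
  linarith
end

section
/- Let Δ ≥ 1 and n_M be natural numbers, let l = n_M div Δ and Q = n_M mod Δ, and suppose l is even. Then for every integer x with 0 ≤ x ≤ n_M: ρ(x) = n_M − 2x if 0 ≤ x ≤ lΔ/2; ρ(x) = Q + lΔ/2 − x if lΔ/2 ≤ x ≤ lΔ/2 + Q; and ρ(x) = 0 if lΔ/2 + Q ≤ x ≤ n_M. -/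
/-!
Identify `a` with its support `A ⊆ [0, n)`. A position `j < n` contributes to the overlap
unless it is *covered*, i.e. `j ∈ A` or `j + Δ ∈ A`, so `ρ(x) = n - max_{#A = x} #covered(A)`.
Every element of `A` covers at most two positions. Writing `n = 2tΔ + Q`, the positions covered
only through `j + Δ ∈ A` lie in `[0, 2tΔ)` and contain no two at distance `Δ`, so there are at
most `tΔ` of them. Hence `#covered(A) ≤ min(2x, x + tΔ, n)`. All three bounds are attained by
subsets of `O ∪ [0, Q)`, where `O` is the union of the odd-numbered length-`Δ` blocks of `[Q, n)`:
no two elements of this set differ by `Δ`, each element of `O` covers two positions and each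
element of `[0, Q)` one.
-/

open Finset

section Vectors

variable {n : ℕ}

def onesSet (a : Fin n → ZMod 2) : Finset ℕ := (univ.filter (a · = 1)).map Fin.valEmbedding

def ofFinset (n : ℕ) (A : Finset ℕ) : Fin n → ZMod 2 := fun i => if (i : ℕ) ∈ A then 1 else 0

lemma mem_onesSet {a : Fin n → ZMod 2} {p : ℕ} : p ∈ onesSet a ↔ ∃ h : p < n, a ⟨p, h⟩ = 1 := by
  simp [onesSet, Fin.exists_iff]

lemma onesSet_subset_range (a : Fin n → ZMod 2) : onesSet a ⊆ range n := fun _ hp =>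
  mem_range.2 (mem_onesSet.1 hp).1

lemma card_onesSet (a : Fin n → ZMod 2) : #(onesSet a) = wt a := card_map _

lemma onesSet_ofFinset {A : Finset ℕ} (hA : A ⊆ range n) : onesSet (ofFinset n A) = A := by
  ext p
  simp only [mem_onesSet, ofFinset]
  constructor
  · rintro ⟨_, h⟩
    by_contra hp
    simp [hp] at h
  · intro hp
    exact ⟨mem_range.1 (hA hp), by simp [hp]⟩

lemma zmod2_eq_zero_iff_ne_one (z : ZMod 2) : z = 0 ↔ z ≠ 1 := by
  revert z; decide

variable {Δ : ℕ} {a : Fin n → ZMod 2}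

lemma gamma1_eq_one_iff (i : Fin (n + Δ)) : gamma1 Δ a i = 1 ↔ (i : ℕ) ∉ onesSet a := by
  unfold gamma1
  split_ifs with h
  · simp [mem_onesSet, h, zmod2_eq_zero_iff_ne_one]
  · simp [mem_onesSet, h]

lemma gamma2_eq_one_iff (i : Fin (n + Δ)) :
    gamma2 Δ a i = 1 ↔ Δ ≤ i ∧ (i : ℕ) - Δ ∉ onesSet a := by
  unfold gamma2
  split_ifs with h
  · simp [mem_onesSet, h, zmod2_eq_zero_iff_ne_one, show (i : ℕ) - Δ < n by omega]
  · simp [h]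

end Vectors

section Blocks

variable {Δ : ℕ}

/-- `j ↦ (⌊j/Δ⌋/2)·Δ + j mod Δ` identifies exactly the pairs `{j, j + Δ}` lying in the same
pair of consecutive length-`Δ` blocks, so it is injective on a set containing no such pair. -/
lemma card_le_of_forall_add_notMem (hΔ : 0 < Δ) {t : ℕ} {T : Finset ℕ}
    (hT : T ⊆ range (2 * t * Δ)) (hgap : ∀ j ∈ T, j + Δ ∉ T) : #T ≤ t * Δ := by
  set f : ℕ → ℕ := fun j => j / Δ / 2 * Δ + j % Δ
  have hf : ∀ j, f j / Δ = j / Δ / 2 ∧ f j % Δ = j % Δ := fun j =>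
    (Nat.div_mod_unique hΔ).2 ⟨by ring, Nat.mod_lt j hΔ⟩
  calc #T ≤ #(range (t * Δ)) := card_le_card_of_injOn f ?_ ?_
    _ = t * Δ := card_range _
  · intro j hj
    have hq : j / Δ < 2 * t := Nat.div_lt_of_lt_mul (by linarith [mem_range.1 (hT hj)])
    have hr := Nat.mod_lt j hΔ
    have ht : (j / Δ / 2 + 1) * Δ ≤ t * Δ := Nat.mul_le_mul_right _ (by omega)
    simp only [coe_range, Set.mem_Iio, f]
    linarith
  · intro j hj j' hj' hjj'
    have hq : j / Δ / 2 = j' / Δ / 2 := by rw [← (hf j).1, hjj', (hf j').1]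
    have hr : j % Δ = j' % Δ := by rw [← (hf j).2, hjj', (hf j').2]
    have hj_eq := Nat.div_add_mod' j Δ
    have hj'_eq := Nat.div_add_mod' j' Δ
    rcases (by omega : j / Δ = j' / Δ ∨ j' / Δ = j / Δ + 1 ∨ j / Δ = j' / Δ + 1)
      with hsame | hnext | hprev
    · rw [← hj_eq, ← hj'_eq, hsame, hr]
    · have : j' = j + Δ := by rw [← hj_eq, ← hj'_eq, hnext, hr]; ring
      exact absurd (this ▸ hj') (hgap j hj)
    · have : j = j' + Δ := by rw [← hj_eq, ← hj'_eq, hprev, hr]; ring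
      exact absurd (this ▸ hj) (hgap j' hj')

end Blocks

section Covered

variable {Δ n : ℕ}

def covered (Δ n : ℕ) (A : Finset ℕ) : Finset ℕ := {j ∈ range n | j ∈ A ∨ j + Δ ∈ A}

lemma overlap_eq_sub_card_covered (a : Fin n → ZMod 2) :
    overlap Δ a = n - #(covered Δ n (onesSet a)) := by
  have huncovered : overlap Δ a = #{j ∈ range n | ¬(j ∈ onesSet a ∨ j + Δ ∈ onesSet a)} := by
    unfold overlap
    refine card_bij (fun i _ => (i : ℕ) - Δ) ?_ ?_ ?_
    · intro i hi
      simp only [mem_filter, mem_univ, true_and, gamma1_eq_one_iff, gamma2_eq_one_iff] at hi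
      simp only [mem_filter, mem_range, not_or]
      exact ⟨by omega, hi.2.2, by rw [Nat.sub_add_cancel hi.2.1]; exact hi.1⟩
    · intro i hi i' hi' h
      simp only [mem_filter, mem_univ, true_and, gamma2_eq_one_iff] at hi hi'
      exact Fin.ext (by omega)
    · intro j hj
      simp only [mem_filter, mem_range, not_or] at hj
      refine ⟨⟨j + Δ, by omega⟩, ?_, by simp⟩
      simp [gamma1_eq_one_iff, gamma2_eq_one_iff, hj.2.1, hj.2.2]
  have hsplit := card_filter_add_card_filter_not (s := range n)
    (fun j => j ∈ onesSet a ∨ j + Δ ∈ onesSet a)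
  rw [card_range] at hsplit
  rw [huncovered, covered]
  omega

def coveredCards (Δ n x : ℕ) : Set ℕ := {m | ∃ A ⊆ range n, #A = x ∧ #(covered Δ n A) = m}

lemma rho_eq_sub_of_isGreatest {x c : ℕ} (h : IsGreatest (coveredCards Δ n x) c) :
    rho Δ n x = n - c := by
  obtain ⟨⟨A, hA, hAx, hAc⟩, hmax⟩ := h
  have hwt : wt (ofFinset n A) = x := by rw [← card_onesSet, onesSet_ofFinset hA, hAx]
  have hoverlap : overlap Δ (ofFinset n A) = n - c := by
    rw [overlap_eq_sub_card_covered, onesSet_ofFinset hA, hAc]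
  apply le_antisymm
  · exact hoverlap ▸ Nat.sInf_le ⟨_, hwt, rfl⟩
  · refine le_csInf ⟨_, _, hwt, rfl⟩ ?_
    rintro _ ⟨a, ha, rfl⟩
    rw [overlap_eq_sub_card_covered]
    exact Nat.sub_le_sub_left
      (hmax ⟨onesSet a, onesSet_subset_range a, (card_onesSet a).trans ha, rfl⟩) n

lemma covered_mono {A B : Finset ℕ} (h : A ⊆ B) : covered Δ n A ⊆ covered Δ n B :=
  monotone_filter_right _ fun _ _ => Or.imp (@h _) (@h _)

lemma card_covered_le (A : Finset ℕ) : #(covered Δ n A) ≤ n :=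
  (card_filter_le _ _).trans (card_range n).le

lemma card_covered_le_two_mul (A : Finset ℕ) : #(covered Δ n A) ≤ 2 * #A := by
  have hsub : covered Δ n A ⊆ A ∪ A.image (· - Δ) := by
    intro j hj
    simp only [covered, mem_filter] at hj
    simp only [mem_union, mem_image]
    exact hj.2.imp id fun h => ⟨j + Δ, h, Nat.add_sub_cancel j Δ⟩
  calc #(covered Δ n A) ≤ #(A ∪ A.image (· - Δ)) := card_le_card hsub
    _ ≤ #A + #(A.image (· - Δ)) := card_union_le _ _
    _ ≤ 2 * #A := by linarith [card_image_le (s := A) (f := (· - Δ))]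

lemma card_covered_le_add_mul (hΔ : 0 < Δ) {t : ℕ} (hn : n ≤ 2 * t * Δ + Δ) {A : Finset ℕ}
    (hA : A ⊆ range n) : #(covered Δ n A) ≤ #A + t * Δ := by
  set T := {j ∈ range (2 * t * Δ) | j ∉ A ∧ j + Δ ∈ A}
  have hsub : covered Δ n A ⊆ A ∪ T := by
    intro j hj
    simp only [covered, mem_filter, mem_range] at hj
    by_cases hjA : j ∈ A
    · exact mem_union_left _ hjA
    · have hjΔ := mem_range.1 (hA (hj.2.resolve_left hjA))
      exact mem_union_right _ (mem_filter.2 ⟨mem_range.2 (by omega), hjA, hj.2.resolve_left hjA⟩)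
  have hT : #T ≤ t * Δ := card_le_of_forall_add_notMem hΔ (filter_subset _ _)
    fun j hj hjT => (mem_filter.1 hjT).2.1 (mem_filter.1 hj).2.2
  calc #(covered Δ n A) ≤ #(A ∪ T) := card_le_card hsub
    _ ≤ #A + #T := card_union_le _ _
    _ ≤ #A + t * Δ := by omega

lemma card_covered_of_forall_add_notMem {A : Finset ℕ} (hA : A ⊆ range n)
    (hgap : ∀ p ∈ A, p + Δ ∉ A) : #(covered Δ n A) = #A + #{p ∈ A | Δ ≤ p} := by
  have hcov : covered Δ n A = A ∪ {p ∈ A | Δ ≤ p}.image (· - Δ) := by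
    ext j
    simp only [covered, mem_filter, mem_union, mem_image, mem_range]
    constructor
    · rintro ⟨-, hj | hj⟩
      · exact Or.inl hj
      · exact Or.inr ⟨j + Δ, ⟨hj, by omega⟩, by omega⟩
    · rintro (hj | ⟨p, ⟨hp, hΔp⟩, rfl⟩)
      · exact ⟨mem_range.1 (hA hj), Or.inl hj⟩
      · have := mem_range.1 (hA hp)
        exact ⟨by omega, Or.inr (by rwa [Nat.sub_add_cancel hΔp])⟩
  have hdisj : Disjoint A ({p ∈ A | Δ ≤ p}.image (· - Δ)) := by
    rw [disjoint_right]
    simp only [mem_image, mem_filter]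
    rintro _ ⟨p, ⟨hp, hΔp⟩, rfl⟩ hpA
    exact hgap _ hpA (by rwa [Nat.sub_add_cancel hΔp])
  rw [hcov, card_union_of_disjoint hdisj, card_image_of_injOn]
  intro p hp q hq hpq
  simp only [coe_filter, Set.mem_ofPred_eq] at hp hq
  simp only at hpq
  omega

end Covered

section OddBlocks

variable {Δ t Q : ℕ}

lemma odd_add_div_self_iff (hΔ : 0 < Δ) (i : ℕ) : Odd ((i + Δ) / Δ) ↔ ¬Odd (i / Δ) := by
  rw [Nat.add_div_right _ hΔ, Nat.odd_add_one]

lemma card_filter_odd_div (hΔ : 0 < Δ) : #{i ∈ range (2 * t * Δ) | Odd (i / Δ)} = t * Δ := by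
  have hodd : #{i ∈ range (2 * t * Δ) | Odd (i / Δ)} ≤ t * Δ :=
    card_le_of_forall_add_notMem hΔ (filter_subset _ _) fun j hj hjΔ =>
      (odd_add_div_self_iff hΔ j).1 (mem_filter.1 hjΔ).2 (mem_filter.1 hj).2
  have heven : #{i ∈ range (2 * t * Δ) | ¬Odd (i / Δ)} ≤ t * Δ :=
    card_le_of_forall_add_notMem hΔ (filter_subset _ _) fun j hj hjΔ =>
      (mem_filter.1 hjΔ).2 ((odd_add_div_self_iff hΔ j).2 (mem_filter.1 hj).2)
  have hsplit := card_filter_add_card_filter_not (s := range (2 * t * Δ)) (fun i => Odd (i / Δ))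
  rw [card_range] at hsplit
  have : 2 * t * Δ = t * Δ + t * Δ := by ring
  omega

def oddBlocks (Δ t Q : ℕ) : Finset ℕ :=
  {i ∈ range (2 * t * Δ) | Odd (i / Δ)}.map (addRightEmbedding Q)

lemma mem_oddBlocks {p : ℕ} :
    p ∈ oddBlocks Δ t Q ↔ Q ≤ p ∧ p < 2 * t * Δ + Q ∧ Odd ((p - Q) / Δ) := by
  simp only [oddBlocks, mem_map, mem_filter, mem_range, addRightEmbedding_apply]
  constructor
  · rintro ⟨i, ⟨hi, hodd⟩, rfl⟩
    exact ⟨by omega, by omega, by rwa [Nat.add_sub_cancel]⟩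
  · rintro ⟨hQp, hp, hodd⟩
    exact ⟨p - Q, ⟨by omega, hodd⟩, by omega⟩

lemma card_oddBlocks (hΔ : 0 < Δ) : #(oddBlocks Δ t Q) = t * Δ := by
  rw [oddBlocks, card_map, card_filter_odd_div hΔ]

lemma add_le_of_mem_oddBlocks {p : ℕ} (hp : p ∈ oddBlocks Δ t Q) : Q + Δ ≤ p := by
  obtain ⟨hQp, -, hodd⟩ := mem_oddBlocks.1 hp
  have := (Nat.div_pos_iff.1 hodd.pos).2
  omega

lemma oddBlocks_union_range_subset : oddBlocks Δ t Q ∪ range Q ⊆ range (2 * t * Δ + Q) := by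
  intro p hp
  rcases mem_union.1 hp with hp | hp
  · exact mem_range.2 (mem_oddBlocks.1 hp).2.1
  · exact mem_range.2 (by have := mem_range.1 hp; omega)

lemma add_notMem_oddBlocks_union_range (hΔ : 0 < Δ) (hQ : Q < Δ) :
    ∀ p ∈ oddBlocks Δ t Q ∪ range Q, p + Δ ∉ oddBlocks Δ t Q ∪ range Q := by
  intro p hp hpΔ
  rcases mem_union.1 hp with hp | hp <;> rcases mem_union.1 hpΔ with hpΔ | hpΔ
  · obtain ⟨hQp, -, hodd⟩ := mem_oddBlocks.1 hp
    have hoddΔ := (mem_oddBlocks.1 hpΔ).2.2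
    rw [show p + Δ - Q = p - Q + Δ by omega, odd_add_div_self_iff hΔ] at hoddΔ
    exact hoddΔ hodd
  · have := (mem_oddBlocks.1 hp).1
    have := mem_range.1 hpΔ
    omega
  · have := add_le_of_mem_oddBlocks hpΔ
    have := mem_range.1 hp
    omega
  · have := mem_range.1 hpΔ
    omega

lemma card_covered_of_subset_oddBlocks_union_range (hΔ : 0 < Δ) (hQ : Q < Δ) {A : Finset ℕ}
    (hA : A ⊆ oddBlocks Δ t Q ∪ range Q) :
    #(covered Δ (2 * t * Δ + Q) A) = #A + #(A ∩ oddBlocks Δ t Q) := by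
  have hfilter : {p ∈ A | Δ ≤ p} = A ∩ oddBlocks Δ t Q := by
    ext p
    simp only [mem_filter, mem_inter, and_congr_right_iff]
    intro hpA
    rcases mem_union.1 (hA hpA) with hp | hp
    · have := add_le_of_mem_oddBlocks hp
      exact iff_of_true (by omega) hp
    · have := mem_range.1 hp
      exact iff_of_false (by omega) fun h => by have := add_le_of_mem_oddBlocks h; omega
  rw [card_covered_of_forall_add_notMem (hA.trans oddBlocks_union_range_subset)
    fun p hp h => add_notMem_oddBlocks_union_range hΔ hQ p (hA hp) (hA h), hfilter]

lemma card_oddBlocks_union_range (hΔ : 0 < Δ) : #(oddBlocks Δ t Q ∪ range Q) = t * Δ + Q := by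
  rw [card_union_of_disjoint, card_oddBlocks hΔ, card_range]
  refine disjoint_left.2 fun p hp hpQ => ?_
  have := add_le_of_mem_oddBlocks hp
  have := mem_range.1 hpQ
  omega

end OddBlocks

section Extremal

variable {Δ t Q x : ℕ}

lemma isGreatest_coveredCards_two_mul (hΔ : 0 < Δ) (hQ : Q < Δ) (hx : x ≤ t * Δ) :
    IsGreatest (coveredCards Δ (2 * t * Δ + Q) x) (2 * x) := by
  refine ⟨?_, by rintro _ ⟨A, -, rfl, rfl⟩; exact card_covered_le_two_mul A⟩
  obtain ⟨A, hA, hAx⟩ := exists_subset_card_eq (hx.trans (card_oddBlocks (Q := Q) hΔ).ge)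
  have hA' : A ⊆ oddBlocks Δ t Q ∪ range Q := hA.trans subset_union_left
  refine ⟨A, hA'.trans oddBlocks_union_range_subset, hAx, ?_⟩
  rw [card_covered_of_subset_oddBlocks_union_range hΔ hQ hA', inter_eq_left.2 hA, hAx, two_mul]

lemma isGreatest_coveredCards_add_mul (hΔ : 0 < Δ) (hQ : Q < Δ) (hx₁ : t * Δ ≤ x)
    (hx₂ : x ≤ t * Δ + Q) : IsGreatest (coveredCards Δ (2 * t * Δ + Q) x) (x + t * Δ) := by
  refine ⟨?_, ?_⟩
  · obtain ⟨A, hSA, hA, hAx⟩ := exists_subsuperset_card_eq (subset_union_left (s₂ := range Q))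
      ((card_oddBlocks hΔ).trans_le hx₁) (hx₂.trans (card_oddBlocks_union_range hΔ).ge)
    refine ⟨A, hA.trans oddBlocks_union_range_subset, hAx, ?_⟩
    rw [card_covered_of_subset_oddBlocks_union_range hΔ hQ hA, inter_eq_right.2 hSA, hAx,
      card_oddBlocks hΔ]
  · rintro _ ⟨A, hA, rfl, rfl⟩
    exact card_covered_le_add_mul hΔ (by omega) hA

lemma isGreatest_coveredCards_full (hΔ : 0 < Δ) (hQ : Q < Δ) (hx₁ : t * Δ + Q ≤ x)
    (hx₂ : x ≤ 2 * t * Δ + Q) :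
    IsGreatest (coveredCards Δ (2 * t * Δ + Q) x) (2 * t * Δ + Q) := by
  refine ⟨?_, by rintro _ ⟨A, -, -, rfl⟩; exact card_covered_le A⟩
  obtain ⟨A, hBA, hA, hAx⟩ := exists_subsuperset_card_eq oddBlocks_union_range_subset
    (card_oddBlocks_union_range hΔ |>.trans_le hx₁) (by rwa [card_range])
  refine ⟨A, hA, hAx, le_antisymm (card_covered_le A) ?_⟩
  calc 2 * t * Δ + Q
      = #(covered Δ (2 * t * Δ + Q) (oddBlocks Δ t Q ∪ range Q)) := by
        rw [card_covered_of_subset_oddBlocks_union_range hΔ hQ subset_rfl,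
          card_oddBlocks_union_range hΔ, inter_eq_right.2 subset_union_left, card_oddBlocks hΔ]
        ring
    _ ≤ #(covered Δ (2 * t * Δ + Q) A) := card_le_card (covered_mono hBA)

end Extremal

/-- Closed form of `ρ` when `l = n_M div Δ` is even (with `Q = n_M mod Δ`):
`ρ(x) = n_M − 2x` for `0 ≤ x ≤ lΔ/2`, `ρ(x) = Q + lΔ/2 − x` for
`lΔ/2 ≤ x ≤ lΔ/2 + Q`, and `ρ(x) = 0` for `lΔ/2 + Q ≤ x ≤ n_M`. -/
theorem rho_closed_form_even (Δ nM : ℕ) (hΔ : 1 ≤ Δ) (hEven : Even (nM / Δ)) :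
    ∀ x : ℕ, x ≤ nM →
      (x ≤ (nM / Δ) * Δ / 2 → rho Δ nM x = nM - 2 * x) ∧
      ((nM / Δ) * Δ / 2 ≤ x → x ≤ (nM / Δ) * Δ / 2 + nM % Δ →
        rho Δ nM x = nM % Δ + (nM / Δ) * Δ / 2 - x) ∧
      ((nM / Δ) * Δ / 2 + nM % Δ ≤ x → rho Δ nM x = 0) := by
  intro x hx
  obtain ⟨t, ht⟩ := hEven
  have hQ : nM % Δ < Δ := Nat.mod_lt nM hΔ
  have hhalf : nM / Δ * Δ / 2 = t * Δ := by
    rw [ht, ← two_mul, mul_assoc, Nat.mul_div_cancel_left _ two_pos]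
  have hn : nM = 2 * t * Δ + nM % Δ := by
    have := Nat.div_add_mod' nM Δ
    rw [ht] at this
    linarith
  rw [hhalf]
  generalize nM % Δ = Q at hQ hn ⊢
  subst hn
  refine ⟨fun h => ?_, fun h₁ h₂ => ?_, fun h => ?_⟩
  · rw [rho_eq_sub_of_isGreatest (isGreatest_coveredCards_two_mul hΔ hQ h)]
  · rw [rho_eq_sub_of_isGreatest (isGreatest_coveredCards_add_mul hΔ hQ h₁ h₂)]
    have : 2 * t * Δ = t * Δ + t * Δ := by ring
    omega
  · rw [rho_eq_sub_of_isGreatest (isGreatest_coveredCards_full hΔ hQ h hx), Nat.sub_self]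
end

section
/- Let n_1, n_2, n_3, n_M, n_D be natural numbers with n_1 ≥ n_2 and n_D + n_M ≤ min(n_2, n_3), and set Δ = n_1 − n_2. Define the sets R⁽¹⁾ = {(r_1, r_2, r_3) ∈ ℝ³ : r_1, r_2, r_3 ≥ 0, r_3 ≤ n_3 − n_M, r_1 + r_2 ≤ n_2 − n_M, r_1 + r_2 + r_3 ≤ n_2 + n_3 − n_D − 2n_M} and R⁽²⁾ = {(r_1, r_2, r_3) ∈ ℝ³ : r_1, r_2, r_3 ≥ 0, r_1 + r_2 ≤ n_M + Δ, r_1 + r_3 ≤ n_M + Δ, r_2 + r_3 ≤ n_M, r_1 + r_2 + r_3 ≤ n_M + φ(n_M, Δ)}. Then the Minkowski sum R⁽¹⁾ + R⁽²⁾ equals the set of all (R_1, R_2, R_3) ∈ ℝ³ with R_1, R_2, R_3 ≥ 0 satisfying: R_1 ≤ n_1; R_2 ≤ n_2; R_3 ≤ n_3; R_1 + R_2 ≤ n_1; R_1 + R_3 ≤ n_1 + n_3 − n_D − n_M; R_2 + R_3 ≤ n_2 + n_3 − n_D − n_M; R_1 + R_2 + R_3 ≤ n_2 + n_3 − n_D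 − n_M + φ(n_M, Δ); and R_1 + R_2 + 2R_3 ≤ n_1 + 2n_3 − n_D − n_M. -/
lemma phi_ge (p q : ℕ) : q ≤ phi p q := by
  unfold phi
  split_ifs with h
  · exact Nat.le_add_right _ _
  · obtain ⟨k, hk⟩ := Nat.not_even_iff_odd.mp h
    have h1 : p / q * q ≤ p := Nat.div_mul_le_self p q
    rw [hk] at h1 ⊢
    have h2 : (2 * k + 1 - 1) / 2 = k := by omega
    rw [h2]
    have h3 : q + k * q ≤ (2 * k + 1) * q := by nlinarith
    omega

lemma phi_two (p q : ℕ) : 2 * phi p q ≤ 2 * q + p := by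
  unfold phi
  split_ifs with h
  · obtain ⟨k, hk⟩ := h
    have h1 : p / q * q ≤ p := Nat.div_mul_le_self p q
    rw [hk] at h1 ⊢
    have h2 : (k + k) / 2 = k := by omega
    rw [h2]
    nlinarith
  · obtain ⟨k, hk⟩ := Nat.not_even_iff_odd.mp h
    have hq : 0 < q := by
      rcases Nat.eq_zero_or_pos q with rfl | hq
      · rw [Nat.div_zero] at hk; omega
      · exact hq
    have h1 : p / q * q ≤ p := Nat.div_mul_le_self p q
    have hmod : q * (p / q) + p % q = p := Nat.div_add_mod p q
    have hlt : p % q < q := Nat.mod_lt p hq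
    rw [hk] at h1 hmod ⊢
    have h2 : (2 * k + 1 - 1) / 2 = k := by omega
    rw [h2]
    have h5 : (2 * k + 1) * q = 2 * (k * q) + q := by ring
    have h6 : q * (2 * k + 1) = 2 * (k * q) + q := by ring
    omega

open Pointwise in
/-- Proposition 1: the Minkowski sum of the two subsystem rate regions
`R⁽¹⁾ + R⁽²⁾` equals the region described by the bounds (12)–(19). -/
theorem minkowski_sum_region (n1 n2 n3 nM nD : ℕ) (h12 : n2 ≤ n1)
    (hweak : nD + nM ≤ min n2 n3) :
    ({r : ℝ × ℝ × ℝ | 0 ≤ r.1 ∧ 0 ≤ r.2.1 ∧ 0 ≤ r.2.2 ∧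
        r.2.2 ≤ (n3 : ℝ) - (nM : ℝ) ∧
        r.1 + r.2.1 ≤ (n2 : ℝ) - (nM : ℝ) ∧
        r.1 + r.2.1 + r.2.2 ≤ (n2 : ℝ) + (n3 : ℝ) - (nD : ℝ) - 2 * (nM : ℝ)} +
      {r : ℝ × ℝ × ℝ | 0 ≤ r.1 ∧ 0 ≤ r.2.1 ∧ 0 ≤ r.2.2 ∧
        r.1 + r.2.1 ≤ (nM : ℝ) + ((n1 - n2 : ℕ) : ℝ) ∧
        r.1 + r.2.2 ≤ (nM : ℝ) + ((n1 - n2 : ℕ) : ℝ) ∧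
        r.2.1 + r.2.2 ≤ (nM : ℝ) ∧
        r.1 + r.2.1 + r.2.2 ≤ (nM : ℝ) + (phi nM (n1 - n2) : ℝ)}) =
    {R : ℝ × ℝ × ℝ | 0 ≤ R.1 ∧ 0 ≤ R.2.1 ∧ 0 ≤ R.2.2 ∧
      R.1 ≤ (n1 : ℝ) ∧
      R.2.1 ≤ (n2 : ℝ) ∧
      R.2.2 ≤ (n3 : ℝ) ∧
      R.1 + R.2.1 ≤ (n1 : ℝ) ∧
      R.1 + R.2.2 ≤ (n1 : ℝ) + (n3 : ℝ) - (nD : ℝ) - (nM : ℝ) ∧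
      R.2.1 + R.2.2 ≤ (n2 : ℝ) + (n3 : ℝ) - (nD : ℝ) - (nM : ℝ) ∧
      R.1 + R.2.1 + R.2.2 ≤
        (n2 : ℝ) + (n3 : ℝ) - (nD : ℝ) - (nM : ℝ) + (phi nM (n1 - n2) : ℝ) ∧
      R.1 + R.2.1 + 2 * R.2.2 ≤
        (n1 : ℝ) + 2 * (n3 : ℝ) - (nD : ℝ) - (nM : ℝ)} := by
  have hΔ : ((n1 - n2 : ℕ) : ℝ) = (n1 : ℝ) - (n2 : ℝ) := by
    exact Nat.cast_sub h12
  have h12r : (n2 : ℝ) ≤ (n1 : ℝ) := by exact_mod_cast h12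
  have hDM2 : (nD : ℝ) + (nM : ℝ) ≤ (n2 : ℝ) := by
    exact_mod_cast (le_min_iff.mp hweak).1
  have hDM3 : (nD : ℝ) + (nM : ℝ) ≤ (n3 : ℝ) := by
    exact_mod_cast (le_min_iff.mp hweak).2
  have hD0 : (0 : ℝ) ≤ (nD : ℝ) := Nat.cast_nonneg _
  have hM0 : (0 : ℝ) ≤ (nM : ℝ) := Nat.cast_nonneg _
  have hF1 : (n1 : ℝ) - (n2 : ℝ) ≤ (phi nM (n1 - n2) : ℝ) := by
    rw [← hΔ]; exact_mod_cast phi_ge nM (n1 - n2)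
  have hF2 : 2 * (phi nM (n1 - n2) : ℝ) ≤ 2 * ((n1 : ℝ) - (n2 : ℝ)) + (nM : ℝ) := by
    rw [← hΔ]; exact_mod_cast phi_two nM (n1 - n2)
  set F : ℝ := (phi nM (n1 - n2) : ℝ) with hFdef
  ext ⟨R1, R2, R3⟩
  simp only [Set.mem_add, Set.mem_setOf_eq, Prod.exists, Prod.mk_add_mk, Prod.mk.injEq]
  constructor
  · rintro ⟨r1, r2, r3, ⟨k1, k2, k3, k4, k5, k6⟩, s1, s2, s3,
      ⟨l1, l2, l3, l4, l5, l6, l7⟩, he1, he2, he3⟩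
    rw [hΔ] at l4 l5
    subst he1; subst he2; subst he3
    refine ⟨by linarith, by linarith, by linarith, by linarith, by linarith,
      by linarith, by linarith, by linarith, by linarith, by linarith, by linarith⟩
  · rintro ⟨h01, h02, h03, hn1, hn2, hn3, hd, he, hf, hg, hh⟩
    set t3 : ℝ := max 0 (max (R3 - ((n3 : ℝ) - nM))
      (R1 + R2 + R3 - ((n2 : ℝ) + n3 - nD - 2 * nM) - nM - ((n1 : ℝ) - n2))) with ht3def
    have t3le : ∀ c : ℝ, 0 ≤ c → R3 - ((n3 : ℝ) - nM) ≤ c →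
        R1 + R2 + R3 - ((n2 : ℝ) + n3 - nD - 2 * nM) - nM - ((n1 : ℝ) - n2) ≤ c →
        t3 ≤ c := fun c u v w => max_le u (max_le v w)
    have t30 : 0 ≤ t3 := le_max_left _ _
    have t3B : R3 - ((n3 : ℝ) - nM) ≤ t3 := le_max_of_le_right (le_max_left _ _)
    have t3S : R1 + R2 + R3 - ((n2 : ℝ) + n3 - nD - 2 * nM) - nM - ((n1 : ℝ) - n2) ≤ t3 :=
      le_max_of_le_right (le_max_right _ _)
    have t3Q : t3 ≤ (nM : ℝ) := t3le _ hM0 (by linarith) (by linarith)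
    have t3P : t3 ≤ (nM : ℝ) + ((n1 : ℝ) - n2) := by linarith
    have t3R3 : t3 ≤ R3 := t3le _ h03 (by linarith) (by linarith)
    set D12 : ℝ := max 0 (max (R1 + R2 - ((n2 : ℝ) - nM))
      (R1 + R2 + R3 - ((n2 : ℝ) + n3 - nD - 2 * nM) - t3)) with hD12def
    have Dle : ∀ c : ℝ, 0 ≤ c → R1 + R2 - ((n2 : ℝ) - nM) ≤ c →
        R1 + R2 + R3 - ((n2 : ℝ) + n3 - nD - 2 * nM) - t3 ≤ c → D12 ≤ c :=
      fun c u v w => max_le u (max_le v w)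
    have D0 : 0 ≤ D12 := le_max_left _ _
    have DA : R1 + R2 - ((n2 : ℝ) - nM) ≤ D12 := le_max_of_le_right (le_max_left _ _)
    have DS : R1 + R2 + R3 - ((n2 : ℝ) + n3 - nD - 2 * nM) - t3 ≤ D12 :=
      le_max_of_le_right (le_max_right _ _)
    have DP : D12 ≤ (nM : ℝ) + ((n1 : ℝ) - n2) :=
      Dle _ (by linarith) (by linarith) (by linarith)
    have hΦt : t3 ≤ (nM : ℝ) + F - (R1 + R2 - ((n2 : ℝ) - nM)) :=
      t3le _ (by linarith) (by linarith) (by linarith)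
    have DΦ : D12 + t3 ≤ (nM : ℝ) + F := by
      have h2 : D12 ≤ (nM : ℝ) + F - t3 := Dle _ (by linarith) (by linarith) (by linarith)
      linarith
    have hx : t3 ≤ (((nM : ℝ) + ((n1 : ℝ) - n2)) + nM + ((n2 : ℝ) - nM) - R1 - R2) / 2 :=
      t3le _ (by linarith) (by linarith) (by linarith)
    have DPQ : D12 + 2 * t3 ≤ ((nM : ℝ) + ((n1 : ℝ) - n2)) + nM := by
      have hy : t3 ≤ ((nM : ℝ) + ((n1 : ℝ) - n2)) + nM -
          (R1 + R2 + R3 - ((n2 : ℝ) + n3 - nD - 2 * nM)) :=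
        t3le _ (by linarith) (by linarith) (by linarith)
      have h2 : D12 ≤ ((nM : ℝ) + ((n1 : ℝ) - n2)) + nM - 2 * t3 :=
        Dle _ (by linarith) (by linarith) (by linarith)
      linarith
    set s1 : ℝ := min D12 (min R1 (((nM : ℝ) + ((n1 : ℝ) - n2)) - t3)) with hs1def
    have s1ge : ∀ c : ℝ, c ≤ D12 → c ≤ R1 → c ≤ ((nM : ℝ) + ((n1 : ℝ) - n2)) - t3 →
        c ≤ s1 := fun c u v w => le_min u (le_min v w)
    have s1D : s1 ≤ D12 := min_le_left _ _
    have s1R1 : s1 ≤ R1 := le_trans (min_le_right _ _) (min_le_left _ _)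
    have s1P : s1 ≤ ((nM : ℝ) + ((n1 : ℝ) - n2)) - t3 :=
      le_trans (min_le_right _ _) (min_le_right _ _)
    have s10 : 0 ≤ s1 := s1ge 0 D0 h01 (by linarith)
    have hn1R : t3 ≤ (n1 : ℝ) - R1 := t3le _ (by linarith) (by linarith) (by linarith)
    have hDR12 : D12 ≤ R1 + R2 := Dle _ (by linarith) (by linarith) (by linarith)
    have hDR12' : D12 ≤ (((nM : ℝ) + ((n1 : ℝ) - n2)) - t3) + R2 :=
      Dle _ (by linarith) (by linarith) (by linarith)
    have hs2R2 : D12 - R2 ≤ s1 := s1ge _ (by linarith) (by linarith) (by linarith)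
    have hn2R : t3 ≤ (n2 : ℝ) - R2 := t3le _ (by linarith) (by linarith) (by linarith)
    have hDQ1 : D12 + t3 ≤ (nM : ℝ) + R1 :=
      have := Dle ((nM : ℝ) + R1 - t3) (by linarith) (by linarith) (by linarith)
      by linarith
    have hs2Q : D12 + t3 - (nM : ℝ) ≤ s1 := s1ge _ (by linarith) (by linarith) (by linarith)
    refine ⟨R1 - s1, R2 - (D12 - s1), R3 - t3,
      ⟨by linarith, by linarith, by linarith, by linarith, by linarith, by linarith⟩,
      s1, D12 - s1, t3,
      ⟨by linarith, by linarith, by linarith, by rw [hΔ]; linarith, by rw [hΔ]; linarith,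
        by linarith, by linarith⟩,
      by ring, by ring, by ring⟩
end

section
/- Let n_M and Δ be natural numbers. Define D = {(r_1, r_2, r_3) ∈ ℝ³ : there exists a natural number x with 0 ≤ x ≤ n_M such that r_3 = x, 0 ≤ r_1 ≤ n_M + Δ − x, 0 ≤ r_2 ≤ n_M − x, and r_1 + r_2 ≤ 2n_M + Δ − 2x − ρ(x)}. Then every point of the set R⁽²⁾ = {(r_1, r_2, r_3) ∈ ℝ³ : r_1, r_2, r_3 ≥ 0, r_1 + r_2 ≤ n_M + Δ, r_1 + r_3 ≤ n_M + Δ, r_2 + r_3 ≤ n_M, r_1 + r_2 + r_3 ≤ n_M + φ(n_M, Δ)} lies in the convex hull of D. -/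
lemma card_fin_filter (n : ℕ) (p : ℕ → Prop) [DecidablePred p] :
    (Finset.univ.filter (fun j : Fin n => p (j:ℕ))).card = ((Finset.range n).filter p).card := by
  rw [Finset.card_filter, Finset.card_filter]
  exact Fin.sum_univ_eq_sum_range (fun j => if p j then 1 else 0) n

lemma wt_indicator (nM : ℕ) (O : Finset ℕ) (hO : O ⊆ Finset.range nM) :
    wt (fun i : Fin nM => if (i:ℕ) ∈ O then (1 : ZMod 2) else 0) = O.card := by
  unfold wt
  have : ∀ i : Fin nM, ((if (i:ℕ) ∈ O then (1 : ZMod 2) else 0) = 1) ↔ ((i:ℕ) ∈ O) := by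
    intro i; split <;> simp_all
  rw [Finset.filter_congr (fun i _ => by rw [this i])]
  rw [card_fin_filter nM (fun j => j ∈ O)]
  congr 1
  rw [Finset.filter_mem_eq_inter, Finset.inter_eq_right.mpr hO]

lemma overlap_indicator (Δ nM : ℕ) (O : Finset ℕ) :
    overlap Δ (fun i : Fin nM => if (i:ℕ) ∈ O then (1 : ZMod 2) else 0)
      = ((Finset.range nM).filter (fun j => j ∉ O ∧ (j + Δ < nM → j + Δ ∉ O))).card := by
  unfold overlap
  have key : ∀ i : Fin (nM + Δ),
      (gamma1 Δ (fun i : Fin nM => if (i:ℕ) ∈ O then (1 : ZMod 2) else 0) i = 1 ∧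
       gamma2 Δ (fun i : Fin nM => if (i:ℕ) ∈ O then (1 : ZMod 2) else 0) i = 1)
      ↔ (((i:ℕ) < nM → (i:ℕ) ∉ O) ∧ (Δ ≤ (i:ℕ) ∧ (i:ℕ) - Δ ∉ O)) := by
    intro i
    unfold gamma1 gamma2
    constructor
    · rintro ⟨h1, h2⟩
      split at h2
      · next hΔ =>
        refine ⟨?_, hΔ, ?_⟩
        · intro hlt
          rw [dif_pos hlt] at h1
          beta_reduce at h1
          intro hmem
          rw [if_pos hmem] at h1
          exact absurd h1 (by decide)
        · intro hmem
          beta_reduce at h2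
          rw [if_pos hmem] at h2
          exact absurd h2 (by decide)
      · exact absurd h2 (by decide)
    · rintro ⟨h1, hΔ, h3⟩
      constructor
      · split
        · next hlt => beta_reduce; rw [if_neg (h1 hlt)]; decide
        · rfl
      · rw [dif_pos hΔ]; beta_reduce; rw [if_neg h3]; decide
  rw [Finset.filter_congr (fun i _ => by rw [key i])]
  rw [card_fin_filter (nM + Δ) (fun j => (j < nM → j ∉ O) ∧ (Δ ≤ j ∧ j - Δ ∉ O))]
  apply Finset.card_bij' (fun j _ => j - Δ) (fun j _ => j + Δ)
  · intro j hj
    simp only [Finset.mem_filter, Finset.mem_range] at hj ⊢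
    obtain ⟨hr, h1, hΔ, h3⟩ := hj
    refine ⟨by omega, h3, fun hlt => ?_⟩
    have : j - Δ + Δ = j := by omega
    rw [this] at hlt ⊢
    exact h1 hlt
  · intro j hj
    simp only [Finset.mem_filter, Finset.mem_range] at hj ⊢
    obtain ⟨hr, h1, h2⟩ := hj
    exact ⟨by omega, fun hlt => h2 hlt, by omega, by simpa using h1⟩
  · intro j hj
    simp only [Finset.mem_filter, Finset.mem_range] at hj
    omega
  · intro j hj
    simp

open Finset

lemma cnt1_formula (D : ℕ) (hD : 0 < D) (n : ℕ) :
    ((Finset.range n).filter (fun j => j / D % 2 = 1)).card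
      = n / D / 2 * D + (if n / D % 2 = 1 then n % D else 0) := by
  induction n with
  | zero => simp
  | succ n ih =>
    rw [Finset.range_add_one, Finset.filter_insert]
    have h1 := Nat.div_add_mod n D
    have h2 := Nat.div_add_mod (n + 1) D
    by_cases hdvd : D ∣ n + 1
    · have hl : (n + 1) / D = n / D + 1 := by rw [Nat.succ_div, if_pos hdvd]
      have hm : (n + 1) % D = 0 := Nat.mod_eq_zero_of_dvd hdvd
      rw [hl, hm, Nat.mul_succ] at h2
      have hmn : n % D = D - 1 := by
        generalize D * (n / D) = P at h1 h2; omega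
      rw [hl, hm]
      have e : (n / D + 1) / 2 = n / D / 2 + n / D % 2 := by omega
      have e2 : (n / D + 1) % 2 = 1 - n / D % 2 := by omega
      rw [e, e2, Nat.add_mul]
      rcases Nat.mod_two_eq_zero_or_one (n / D) with hb | hb
      · rw [if_neg (by omega), ih, hb]
        simp
      · rw [if_pos hb, Finset.card_insert_of_notMem (by simp), ih, if_pos hb, hb, hmn]
        simp only [if_neg (by omega : ¬(1 - 1 : ℕ) = 1)]
        generalize n / D / 2 * D = P
        omega
    · have hl : (n + 1) / D = n / D := by rw [Nat.succ_div, if_neg hdvd]; omega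
      rw [hl] at h2
      have hm : (n + 1) % D = n % D + 1 := by
        generalize D * (n / D) = P at h1 h2; omega
      rw [hl, hm]
      rcases Nat.mod_two_eq_zero_or_one (n / D) with hb | hb
      · simp [hb, ih]
      · rw [if_pos hb, Finset.card_insert_of_notMem (by simp), ih, if_pos hb, if_pos hb]
        omega

lemma phase_identity (Δ nM : ℕ) (hΔ : 0 < Δ) :
    ((Finset.range nM).filter (fun j => j / Δ % 2 = 1)).card
      + ((Finset.range nM).filter (fun j => j / Δ % 2 = 0 ∧ nM ≤ j + Δ)).card
      + phi nM Δ = nM + Δ := by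
  have hpart : ∀ n : ℕ, ((Finset.range n).filter (fun j => j / Δ % 2 = 0)).card
      + ((Finset.range n).filter (fun j => j / Δ % 2 = 1)).card = n := by
    intro n
    have h2 := Finset.card_filter_add_card_filter_not
      (s := Finset.range n) (p := fun j => j / Δ % 2 = 1)
    rw [Finset.card_range] at h2
    have h3 : (Finset.range n).filter (fun j => j / Δ % 2 = 0)
        = (Finset.range n).filter (fun j => ¬ (j / Δ % 2 = 1)) := by
      apply Finset.filter_congr
      intro j _
      generalize j / Δ = E
      omega
    rw [h3, Nat.add_comm]
    exact h2
  by_cases hle : Δ ≤ nM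
  · -- main case
    have h := Nat.div_add_mod nM Δ
    have hm := Nat.mod_lt nM hΔ
    have hl1 : 1 ≤ nM / Δ := by
      rw [Nat.le_div_iff_mul_le hΔ]; omega
    -- (nM - Δ) div/mod
    have key : nM - Δ = Δ * (nM / Δ - 1) + nM % Δ := by
      have hP : Δ ≤ Δ * (nM / Δ) := Nat.le_mul_of_pos_right Δ hl1
      rw [Nat.mul_sub, Nat.mul_one]
      generalize Δ * (nM / Δ) = P at h hP ⊢
      omega
    have hdiv : (nM - Δ) / Δ = nM / Δ - 1 := by
      rw [key, Nat.mul_add_div hΔ, Nat.div_eq_of_lt hm]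
      omega
    have hmod : (nM - Δ) % Δ = nM % Δ := by
      rw [key, Nat.mul_add_mod, Nat.mod_eq_of_lt hm]
    -- P2 as set difference
    have hP2 : ((Finset.range nM).filter (fun j => j / Δ % 2 = 0 ∧ nM ≤ j + Δ))
        = ((Finset.range nM).filter (fun j => j / Δ % 2 = 0))
          \ ((Finset.range (nM - Δ)).filter (fun j => j / Δ % 2 = 0)) := by
      ext j
      simp only [Finset.mem_filter, Finset.mem_sdiff, Finset.mem_range]
      generalize j / Δ = E
      omega
    have hsub : ((Finset.range (nM - Δ)).filter (fun j => j / Δ % 2 = 0))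
        ⊆ ((Finset.range nM).filter (fun j => j / Δ % 2 = 0)) :=
      Finset.filter_subset_filter _ (by
        intro j hj; simp only [Finset.mem_range] at *; omega)
    have hcard : ((Finset.range nM).filter (fun j => j / Δ % 2 = 0 ∧ nM ≤ j + Δ)).card
        + ((Finset.range (nM - Δ)).filter (fun j => j / Δ % 2 = 0)).card
        = ((Finset.range nM).filter (fun j => j / Δ % 2 = 0)).card := by
      rw [hP2]
      exact Finset.card_sdiff_add_card_eq_card hsub
    have e1 := hpart nM
    have e2 := hpart (nM - Δ)
    have c1 := cnt1_formula Δ hΔ nM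
    have c2 := cnt1_formula Δ hΔ (nM - Δ)
    rw [hdiv, hmod] at c2
    set X1 := ((Finset.range nM).filter (fun j => j / Δ % 2 = 1)).card with hX1
    set X2 := ((Finset.range nM).filter (fun j => j / Δ % 2 = 0 ∧ nM ≤ j + Δ)).card with hX2
    set Y0 := ((Finset.range nM).filter (fun j => j / Δ % 2 = 0)).card with hY0
    set Y0' := ((Finset.range (nM - Δ)).filter (fun j => j / Δ % 2 = 0)).card with hY0'
    set X1' := ((Finset.range (nM - Δ)).filter (fun j => j / Δ % 2 = 1)).card with hX1'
    rcases Nat.even_or_odd (nM / Δ) with he | ho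
    · obtain ⟨k, hk⟩ := he
      have hphi : phi nM Δ = Δ + nM / Δ / 2 * Δ := by
        unfold phi; rw [if_pos ⟨k, hk⟩]
      have hk2 : nM / Δ / 2 * Δ = k * Δ := by
        have : nM / Δ / 2 = k := by omega
        rw [this]
      have hk3 : (nM / Δ - 1) / 2 * Δ = k * Δ - Δ := by
        have : (nM / Δ - 1) / 2 = k - 1 := by omega
        rw [this, Nat.sub_mul, one_mul]
      have hk4 : (nM / Δ - 1) % 2 = 1 := by omega
      rw [if_neg (by omega)] at c1
      rw [if_pos hk4] at c2
      rw [hk2] at c1 hphi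
      rw [hk3] at c2
      have hexp : Δ * (nM / Δ) = 2 * (k * Δ) := by rw [hk]; ring
      have hkd : Δ ≤ k * Δ := Nat.le_mul_of_pos_left Δ (by omega)
      rw [hphi]
      clear hk2 hk3 hk4 hphi hP2 hsub hpart key hdiv hmod hX1 hX2 hY0 hY0' hX1'
      omega
    · obtain ⟨k, hk⟩ := ho
      have hphi : phi nM Δ = nM - (nM / Δ - 1) / 2 * Δ := by
        unfold phi; rw [if_neg (by rw [hk]; simp [Nat.even_iff])]
      have hk3 : (nM / Δ - 1) / 2 * Δ = k * Δ := by
        have : (nM / Δ - 1) / 2 = k := by omega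
        rw [this]
      have hk5 : nM / Δ % 2 = 1 := by omega
      have hk2 : nM / Δ / 2 * Δ = k * Δ := by
        have : nM / Δ / 2 = k := by omega
        rw [this]
      rw [if_pos hk5] at c1
      rw [if_neg (by omega)] at c2
      rw [hk2] at c1
      rw [hk3] at c2 hphi
      have hexp : Δ * (nM / Δ) = 2 * (k * Δ) + Δ := by rw [hk]; ring
      rw [hphi]
      clear hk2 hk3 hk5 hphi hP2 hsub hpart key hdiv hmod hX1 hX2 hY0 hY0' hX1'
      omega
  · -- nM < Δ
    have hdiv0 : nM / Δ = 0 := Nat.div_eq_of_lt (by omega)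
    have hphi : phi nM Δ = Δ := by
      unfold phi; rw [hdiv0, if_pos (by simp)]; simp
    have hP1 : ((Finset.range nM).filter (fun j => j / Δ % 2 = 1)) = ∅ := by
      apply Finset.filter_eq_empty_iff.mpr
      intro j hj
      simp only [Finset.mem_range] at hj
      rw [Nat.div_eq_of_lt (by omega)]
      omega
    have hP2 : ((Finset.range nM).filter (fun j => j / Δ % 2 = 0 ∧ nM ≤ j + Δ))
        = Finset.range nM := by
      apply Finset.filter_true_of_mem
      intro j hj
      simp only [Finset.mem_range] at hj
      rw [Nat.div_eq_of_lt (by omega)]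
      omega
    rw [hP1, hP2, hphi]
    simp [Nat.add_comm]
lemma rho_le (Δ nM x : ℕ) (hx : x ≤ nM) :
    rho Δ nM x + 2 * x ≤ nM ∨ rho Δ nM x + x + phi nM Δ ≤ nM + Δ ∨ rho Δ nM x = 0 := by
  have hrho : ∀ O : Finset ℕ, O ⊆ Finset.range nM → O.card = x →
      rho Δ nM x ≤ ((Finset.range nM).filter
        (fun j => j ∉ O ∧ (j + Δ < nM → j + Δ ∉ O))).card := by
    intro O hsub hcard
    apply Nat.sInf_le
    refine ⟨fun i : Fin nM => if (i:ℕ) ∈ O then (1 : ZMod 2) else 0, ?_, ?_⟩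
    · rw [Set.mem_setOf_eq, wt_indicator nM O hsub, hcard]
    · exact overlap_indicator Δ nM O
  by_cases hΔ0 : Δ = 0
  · subst hΔ0
    right; left
    have hphi0 : phi nM 0 = 0 := by simp [phi]
    obtain ⟨O, hOsub, hOcard⟩ := Finset.exists_subset_card_eq
      (s := Finset.range nM) (n := x) (by simpa using hx)
    have h1 := hrho O hOsub hOcard
    have h2 : ((Finset.range nM).filter
        (fun j => j ∉ O ∧ (j + 0 < nM → j + 0 ∉ O))).card ≤ (Finset.range nM \ O).card := by
      apply Finset.card_le_card
      intro j hj
      simp only [Finset.mem_filter, Finset.mem_sdiff] at hj ⊢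
      exact ⟨hj.1, hj.2.1⟩
    rw [Finset.card_sdiff_of_subset hOsub, Finset.card_range, hOcard] at h2
    omega
  · have hΔ : 0 < Δ := Nat.pos_of_ne_zero hΔ0
    set P1 := (Finset.range nM).filter (fun j => j / Δ % 2 = 1) with hP1def
    set P2 := (Finset.range nM).filter (fun j => j / Δ % 2 = 0 ∧ nM ≤ j + Δ) with hP2def
    have hid := phase_identity Δ nM hΔ
    rw [← hP1def, ← hP2def] at hid
    have hP1mem : ∀ j ∈ P1, j / Δ % 2 = 1 ∧ j < nM := by
      intro j hj
      rw [hP1def, Finset.mem_filter, Finset.mem_range] at hj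
      exact ⟨hj.2, hj.1⟩
    have hP12disj : Disjoint P1 P2 := by
      rw [Finset.disjoint_left]
      intro j hj1 hj2
      rw [hP1def, Finset.mem_filter] at hj1
      rw [hP2def, Finset.mem_filter] at hj2
      omega
    have hup : ∀ j, j + Δ < nM → j / Δ % 2 = 0 → j + Δ ∈ P1 := by
      intro j hlt hpar
      rw [hP1def, Finset.mem_filter, Finset.mem_range]
      rw [Nat.add_div_right j hΔ]
      omega
    by_cases hx1 : x ≤ P1.card
    · -- phase 1 : all ones at odd levels
      left
      obtain ⟨O, hOP1, hOcard⟩ := Finset.exists_subset_card_eq hx1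
      have hOsub : O ⊆ Finset.range nM := hOP1.trans (Finset.filter_subset _ _)
      have hOodd : ∀ j ∈ O, j / Δ % 2 = 1 ∧ j < nM := fun j hj => hP1mem j (hOP1 hj)
      have hOΔ : ∀ j ∈ O, Δ ≤ j := by
        intro j hj
        by_contra hlt
        have := (hOodd j hj).1
        rw [Nat.div_eq_of_lt (by omega)] at this
        omega
      set O' := O.image (fun j => j - Δ) with hO'def
      have hO'card : O'.card = x := by
        rw [hO'def, Finset.card_image_of_injOn, hOcard]
        intro a ha b hb hab
        have := hOΔ a ha; have := hOΔ b hb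
        simp only at hab
        omega
      have hO'sub : O' ⊆ Finset.range nM \ O := by
        intro b hb
        rw [hO'def, Finset.mem_image] at hb
        obtain ⟨o, ho, rfl⟩ := hb
        have hoΔ := hOΔ o ho
        have hoodd := hOodd o ho
        rw [Finset.mem_sdiff, Finset.mem_range]
        constructor
        · omega
        · intro hmem
          have h1 := (hOodd _ hmem).1
          have h2 : (o - Δ + Δ) / Δ = (o - Δ) / Δ + 1 := Nat.add_div_right _ hΔ
          have h3 : o - Δ + Δ = o := by omega
          rw [h3] at h2
          omega
      have hbad : ((Finset.range nM).filter
          (fun j => j ∉ O ∧ (j + Δ < nM → j + Δ ∉ O))).card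
          ≤ ((Finset.range nM \ O) \ O').card := by
        apply Finset.card_le_card
        intro j hj
        rw [Finset.mem_filter, Finset.mem_range] at hj
        rw [Finset.mem_sdiff, Finset.mem_sdiff, Finset.mem_range]
        refine ⟨⟨hj.1, hj.2.1⟩, ?_⟩
        intro hj'
        rw [hO'def, Finset.mem_image] at hj'
        obtain ⟨o, ho, hoe⟩ := hj'
        have hoΔ := hOΔ o ho
        have holt := (hOodd o ho).2
        have : j + Δ = o := by omega
        exact hj.2.2 (by omega) (this ▸ ho)
      have hcards : ((Finset.range nM \ O) \ O').card
          = nM - x - x := by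
        rw [Finset.card_sdiff_of_subset hO'sub, Finset.card_sdiff_of_subset hOsub, Finset.card_range, hOcard, hO'card]
      have h2x : x + x ≤ nM := by
        have := Finset.card_le_card hO'sub
        rw [hO'card, Finset.card_sdiff_of_subset hOsub, Finset.card_range, hOcard] at this
        omega
      have := hrho O hOsub hOcard
      omega
    · by_cases hx2 : x ≤ P1.card + P2.card
      · -- phase 2
        right; left
        obtain ⟨T, hTP2, hTcard⟩ := Finset.exists_subset_card_eq
          (s := P2) (n := x - P1.card) (by omega)
        have hdisjT : Disjoint P1 T := hP12disj.mono_right hTP2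
        set O := P1 ∪ T with hOdef
        have hOcard : O.card = x := by
          rw [hOdef, Finset.card_union_of_disjoint hdisjT, hTcard]
          omega
        have hOsub : O ⊆ Finset.range nM := by
          rw [hOdef]
          apply Finset.union_subset (Finset.filter_subset _ _)
          exact hTP2.trans (Finset.filter_subset _ _)
        have hbadsub : ((Finset.range nM).filter
            (fun j => j ∉ O ∧ (j + Δ < nM → j + Δ ∉ O))) ⊆ P2 \ T := by
          intro j hj
          rw [Finset.mem_filter, Finset.mem_range] at hj
          obtain ⟨hjn, hjO, hcond⟩ := hj
          have hjP1 : j ∉ P1 := fun h => hjO (hOdef ▸ Finset.mem_union_left _ h)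
          have hjpar : j / Δ % 2 = 0 := by
            by_contra hne
            exact hjP1 (by rw [hP1def, Finset.mem_filter, Finset.mem_range]; omega)
          have hjT : j ∉ T := fun h => hjO (hOdef ▸ Finset.mem_union_right _ h)
          rw [Finset.mem_sdiff]
          refine ⟨?_, hjT⟩
          rw [hP2def, Finset.mem_filter, Finset.mem_range]
          refine ⟨hjn, hjpar, ?_⟩
          by_contra hlt
          exact hcond (by omega) (hOdef ▸ Finset.mem_union_left _ (hup j (by omega) hjpar))
        have hbadcard : (P2 \ T).card = P2.card - (x - P1.card) := by
          rw [Finset.card_sdiff_of_subset hTP2, hTcard]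
        have h1 := hrho O hOsub hOcard
        have h2 := Finset.card_le_card hbadsub
        omega
      · -- phase 3
        right; right
        have hPsub : P1 ∪ P2 ⊆ Finset.range nM := by
          apply Finset.union_subset (Finset.filter_subset _ _) (Finset.filter_subset _ _)
        have hPcard : (P1 ∪ P2).card = P1.card + P2.card :=
          Finset.card_union_of_disjoint hP12disj
        obtain ⟨O, hPO, hOsub, hOcard⟩ := Finset.exists_subsuperset_card_eq (n := x) hPsub
          (by rw [hPcard]; omega) (by rw [Finset.card_range]; exact hx)
        have hbadempty : ((Finset.range nM).filter
            (fun j => j ∉ O ∧ (j + Δ < nM → j + Δ ∉ O))) = ∅ := by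
          rw [Finset.filter_eq_empty_iff]
          intro j hjn
          rw [Finset.mem_range] at hjn
          rintro ⟨hjO, hcond⟩
          have hjP1 : j ∉ P1 := fun h => hjO (hPO (Finset.mem_union_left _ h))
          have hjpar : j / Δ % 2 = 0 := by
            by_contra hne
            exact hjP1 (by rw [hP1def, Finset.mem_filter, Finset.mem_range]; omega)
          by_cases hlt : j + Δ < nM
          · exact hcond hlt (hPO (Finset.mem_union_left _ (hup j hlt hjpar)))
          · apply hjO
            apply hPO
            apply Finset.mem_union_right
            rw [hP2def, Finset.mem_filter, Finset.mem_range]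
            exact ⟨hjn, hjpar, by omega⟩
        have h1 := hrho O hOsub hOcard
        rw [hbadempty] at h1
        simpa using h1
lemma phi_cases (nM Δ : ℕ) (hΔ : 0 < Δ) :
    (∃ k m, m < Δ ∧ nM = 2*(k*Δ) + m ∧ phi nM Δ = Δ + k*Δ) ∨
    (∃ k m, m < Δ ∧ nM = 2*(k*Δ) + Δ + m ∧ phi nM Δ = nM - k*Δ) := by
  have h := Nat.div_add_mod nM Δ
  have hm := Nat.mod_lt nM hΔ
  rcases Nat.even_or_odd (nM / Δ) with he | ho
  · obtain ⟨k, hk⟩ := he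
    left
    refine ⟨k, nM % Δ, hm, ?_, ?_⟩
    · have : Δ * (nM/Δ) = 2*(k*Δ) := by rw [hk]; ring
      omega
    · unfold phi; rw [if_pos ⟨k, hk⟩]
      have h2 : nM / Δ / 2 = k := by omega
      rw [h2]
  · obtain ⟨k, hk⟩ := ho
    right
    refine ⟨k, nM % Δ, hm, ?_, ?_⟩
    · have : Δ * (nM/Δ) = 2*(k*Δ) + Δ := by rw [hk]; ring
      omega
    · unfold phi; rw [if_neg (by rw [hk]; simp [Nat.even_iff])]
      have h2 : (nM / Δ - 1) / 2 = k := by omega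
      rw [h2]

lemma phi_facts (nM Δ : ℕ) :
    Δ ≤ phi nM Δ ∧ phi nM Δ ≤ nM + Δ ∧ 2 * phi nM Δ ≤ nM + 2 * Δ := by
  by_cases hΔ : 0 < Δ
  · rcases phi_cases nM Δ hΔ with ⟨k, m, hm, hn, hp⟩ | ⟨k, m, hm, hn, hp⟩
    · omega
    · omega
  · have h0 : Δ = 0 := by omega
    subst h0
    have : phi nM 0 = 0 := by simp [phi]
    omega

lemma split_lemma (t A0 A1 B0 B1 C0 C1 u v : ℝ)
    (ht0 : 0 < t) (ht1 : t < 1)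
    (hA0C : A0 ≤ C0) (hB0C : B0 ≤ C0) (hC0 : C0 ≤ A0 + B0)
    (hA1C : A1 ≤ C1) (hB1C : B1 ≤ C1) (hC1 : C1 ≤ A1 + B1)
    (hu0 : 0 ≤ u) (hv0 : 0 ≤ v)
    (hu : u ≤ (1-t)*A0 + t*A1) (hv : v ≤ (1-t)*B0 + t*B1)
    (huv : u + v ≤ (1-t)*C0 + t*C1) :
    ∃ u0 v0 u1 v1, 0 ≤ u0 ∧ 0 ≤ v0 ∧ 0 ≤ u1 ∧ 0 ≤ v1 ∧
      u0 ≤ A0 ∧ v0 ≤ B0 ∧ u1 ≤ A1 ∧ v1 ≤ B1 ∧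
      u0 + v0 ≤ C0 ∧ u1 + v1 ≤ C1 ∧
      (1-t)*u0 + t*u1 = u ∧ (1-t)*v0 + t*v1 = v := by
  have hs : (0:ℝ) < 1 - t := by linarith
  have hA1 : 0 ≤ A1 := by linarith
  have hB1 : 0 ≤ B1 := by linarith
  have hA0 : 0 ≤ A0 := by linarith
  have hB0 : 0 ≤ B0 := by linarith
  have hC0p : 0 ≤ C0 := by linarith
  have hC1p : 0 ≤ C1 := by linarith
  have hsls : (u+v-C1)*t ≤ (C0-u-v)*(1-t) := by linarith
  have e1 : -(u*(1-t)) ≤ u*t := by linarith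
  have e2 : -(u*(1-t)) ≤ (A0-u)*(1-t) := by linarith [mul_nonneg hA0 hs.le]
  have e3 : (u-A1)*t ≤ u*t := by linarith [mul_nonneg hA1 ht0.le]
  have e4 : (u-A1)*t ≤ (A0-u)*(1-t) := by linarith
  have f1 : -(v*(1-t)) ≤ v*t := by linarith
  have f2 : -(v*(1-t)) ≤ (B0-v)*(1-t) := by linarith [mul_nonneg hB0 hs.le]
  have f3 : (v-B1)*t ≤ v*t := by linarith [mul_nonneg hB1 ht0.le]
  have f4 : (v-B1)*t ≤ (B0-v)*(1-t) := by linarith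
  obtain ⟨aLu, haLu⟩ : ∃ x:ℝ, x = max (-(u*(1-t))) ((u-A1)*t) := ⟨_, rfl⟩
  obtain ⟨aUu, haUu⟩ : ∃ x:ℝ, x = min (u*t) ((A0-u)*(1-t)) := ⟨_, rfl⟩
  obtain ⟨aLv, haLv⟩ : ∃ x:ℝ, x = max (-(v*(1-t))) ((v-B1)*t) := ⟨_, rfl⟩
  obtain ⟨aUv, haUv⟩ : ∃ x:ℝ, x = min (v*t) ((B0-v)*(1-t)) := ⟨_, rfl⟩
  have h1 : aLu ≤ aUu := by
    rw [haLu, haUu]; exact max_le (le_min e1 e2) (le_min e3 e4)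
  have h2 : aLv ≤ aUv := by
    rw [haLv, haUv]; exact max_le (le_min f1 f2) (le_min f3 f4)
  have hLsUU : (u+v-C1)*t ≤ aUu + aUv := by
    rw [haUu, haUv]
    rcases le_total (u*t) ((A0-u)*(1-t)) with h | h <;>
      rcases le_total (v*t) ((B0-v)*(1-t)) with h' | h'
    · rw [min_eq_left h, min_eq_left h']
      linarith [mul_nonneg hC1p ht0.le]
    · rw [min_eq_left h, min_eq_right h']
      linarith [mul_le_mul_of_nonneg_left hB1C ht0.le]
    · rw [min_eq_right h, min_eq_left h']
      linarith [mul_le_mul_of_nonneg_left hA1C ht0.le]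
    · rw [min_eq_right h, min_eq_right h']
      linarith [mul_le_mul_of_nonneg_left hC0 hs.le]
  have hLLUs : aLu + aLv ≤ (C0-u-v)*(1-t) := by
    rw [haLu, haLv]
    rcases le_total (-(u*(1-t))) ((u-A1)*t) with h | h <;>
      rcases le_total (-(v*(1-t))) ((v-B1)*t) with h' | h'
    · rw [max_eq_right h, max_eq_right h']
      linarith [mul_le_mul_of_nonneg_left hC1 ht0.le]
    · rw [max_eq_right h, max_eq_left h']
      linarith [mul_le_mul_of_nonneg_left hA0C hs.le]
    · rw [max_eq_left h, max_eq_right h']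
      linarith [mul_le_mul_of_nonneg_left hB0C hs.le]
    · rw [max_eq_left h, max_eq_left h']
      linarith [mul_nonneg hC0p hs.le]
  obtain ⟨σ, hσ⟩ : ∃ x:ℝ, x = max ((u+v-C1)*t) (aLu + aLv) := ⟨_, rfl⟩
  obtain ⟨α, hα⟩ : ∃ x:ℝ, x = max aLu (σ - aUv) := ⟨_, rfl⟩
  obtain ⟨β, hβ⟩ : ∃ x:ℝ, x = σ - α := ⟨_, rfl⟩
  have hσU : σ ≤ (C0-u-v)*(1-t) := by rw [hσ]; exact max_le hsls hLLUs
  have hσL : (u+v-C1)*t ≤ σ := by rw [hσ]; exact le_max_left _ _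
  have hσLL : aLu + aLv ≤ σ := by rw [hσ]; exact le_max_right _ _
  have hαL : aLu ≤ α := by rw [hα]; exact le_max_left _ _
  have hαU : α ≤ aUu := by
    rw [hα]
    apply max_le h1
    have : σ ≤ aUu + aUv := by rw [hσ]; exact max_le hLsUU (by linarith)
    linarith
  have hβL : aLv ≤ β := by
    have hα2 : α ≤ σ - aLv := by
      rw [hα]; exact max_le (by linarith) (by linarith)
    rw [hβ]; linarith
  have hβU : β ≤ aUv := by
    have : σ - aUv ≤ α := by rw [hα]; exact le_max_right _ _
    rw [hβ]; linarith
  have hαβ : α + β = σ := by rw [hβ]; ring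
  have ht0' : t ≠ 0 := ne_of_gt ht0
  have hs' : (1:ℝ) - t ≠ 0 := ne_of_gt hs
  have hLu1 : -(u*(1-t)) ≤ α := le_trans (by rw [haLu]; exact le_max_left _ _) hαL
  have hLu2 : (u-A1)*t ≤ α := le_trans (by rw [haLu]; exact le_max_right _ _) hαL
  have hUu1 : α ≤ u*t := le_trans hαU (by rw [haUu]; exact min_le_left _ _)
  have hUu2 : α ≤ (A0-u)*(1-t) := le_trans hαU (by rw [haUu]; exact min_le_right _ _)
  have hLv1 : -(v*(1-t)) ≤ β := le_trans (by rw [haLv]; exact le_max_left _ _) hβL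
  have hLv2 : (v-B1)*t ≤ β := le_trans (by rw [haLv]; exact le_max_right _ _) hβL
  have hUv1 : β ≤ v*t := le_trans hβU (by rw [haUv]; exact min_le_left _ _)
  have hUv2 : β ≤ (B0-v)*(1-t) := le_trans hβU (by rw [haUv]; exact min_le_right _ _)
  refine ⟨u + α/(1-t), v + β/(1-t), u - α/t, v - β/t, ?_, ?_, ?_, ?_, ?_, ?_, ?_, ?_, ?_, ?_, ?_, ?_⟩
  · have : -u ≤ α/(1-t) := (le_div_iff₀ hs).mpr (by linarith)
    linarith
  · have : -v ≤ β/(1-t) := (le_div_iff₀ hs).mpr (by linarith)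
    linarith
  · have : α/t ≤ u := (div_le_iff₀ ht0).mpr (by linarith)
    linarith
  · have : β/t ≤ v := (div_le_iff₀ ht0).mpr (by linarith)
    linarith
  · have : α/(1-t) ≤ A0 - u := (div_le_iff₀ hs).mpr (by linarith)
    linarith
  · have : β/(1-t) ≤ B0 - v := (div_le_iff₀ hs).mpr (by linarith)
    linarith
  · have : u - A1 ≤ α/t := (le_div_iff₀ ht0).mpr (by linarith)
    linarith
  · have : v - B1 ≤ β/t := (le_div_iff₀ ht0).mpr (by linarith)
    linarith
  · have hsum : α + β ≤ (C0-u-v)*(1-t) := by rw [hαβ]; exact hσU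
    have hle : (α+β)/(1-t) ≤ C0-u-v := (div_le_iff₀ hs).mpr (by linarith)
    have hd : α/(1-t) + β/(1-t) = (α+β)/(1-t) := by ring
    linarith [hd ▸ hle]
  · have hsum : (u+v-C1)*t ≤ α + β := by rw [hαβ]; exact hσL
    have hle : u+v-C1 ≤ (α+β)/t := (le_div_iff₀ ht0).mpr (by linarith)
    have hd : α/t + β/t = (α+β)/t := by ring
    linarith [hd ▸ hle]
  · field_simp
    ring
  · field_simp
    ring
/-- Every point of the region `R⁽²⁾` lies in the convex hull of the set `D` of
rate points achieved by the orthogonal bit-level assignments. -/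
theorem region_two_subset_convexHull (nM Δ : ℕ) :
    {r : ℝ × ℝ × ℝ | 0 ≤ r.1 ∧ 0 ≤ r.2.1 ∧ 0 ≤ r.2.2 ∧
        r.1 + r.2.1 ≤ (nM : ℝ) + (Δ : ℝ) ∧
        r.1 + r.2.2 ≤ (nM : ℝ) + (Δ : ℝ) ∧
        r.2.1 + r.2.2 ≤ (nM : ℝ) ∧
        r.1 + r.2.1 + r.2.2 ≤ (nM : ℝ) + (phi nM Δ : ℝ)} ⊆
      convexHull ℝ {r : ℝ × ℝ × ℝ | ∃ x : ℕ, x ≤ nM ∧ r.2.2 = (x : ℝ) ∧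
        0 ≤ r.1 ∧ r.1 ≤ (nM : ℝ) + (Δ : ℝ) - (x : ℝ) ∧
        0 ≤ r.2.1 ∧ r.2.1 ≤ (nM : ℝ) - (x : ℝ) ∧
        r.1 + r.2.1 ≤ 2 * (nM : ℝ) + (Δ : ℝ) - 2 * (x : ℝ)
          - (rho Δ nM x : ℝ)} := by
  obtain ⟨hpf1, hpf2, hpf3⟩ := phi_facts nM Δ
  have hpf1R : (Δ:ℝ) ≤ (phi nM Δ : ℝ) := by exact_mod_cast hpf1
  have hpf3R : 2 * (phi nM Δ : ℝ) ≤ (nM:ℝ) + 2 * Δ := by exact_mod_cast hpf3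
  have hP0 : (0:ℝ) ≤ (phi nM Δ : ℝ) := Nat.cast_nonneg _
  have hD0 : (0:ℝ) ≤ (Δ:ℝ) := Nat.cast_nonneg _
  have hcC : ∀ y : ℕ, y ≤ nM →
      min ((nM:ℝ) + Δ) (min ((nM:ℝ) + (phi nM Δ:ℝ) - y) (2*(nM:ℝ) + Δ - 2*y))
        ≤ 2*(nM:ℝ) + Δ - 2*(y:ℝ) - (rho Δ nM y : ℝ) := by
    intro y hy
    rcases rho_le Δ nM y hy with h | h | h
    · have hR : (rho Δ nM y : ℝ) + 2*y ≤ (nM:ℝ) := by exact_mod_cast h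
      exact le_trans (min_le_left _ _) (by linarith)
    · have hR : (rho Δ nM y : ℝ) + y + (phi nM Δ:ℝ) ≤ (nM:ℝ) + Δ := by exact_mod_cast h
      exact le_trans (le_trans (min_le_right _ _) (min_le_left _ _)) (by linarith)
    · have hR : (rho Δ nM y : ℝ) = 0 := by exact_mod_cast h
      exact le_trans (le_trans (min_le_right _ _) (min_le_right _ _)) (by linarith)
  intro r hr
  obtain ⟨u, v, w⟩ := r
  obtain ⟨h1, h2, h3, h4, h5, h6, h7⟩ := hr
  simp only at h1 h2 h3 h4 h5 h6 h7
  have hwN : w ≤ (nM:ℝ) := by linarith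
  set x := Nat.floor w with hxdef
  have hxle : (x:ℝ) ≤ w := Nat.floor_le h3
  have hxw : w < (x:ℝ) + 1 := Nat.lt_floor_add_one w
  have hxnM : x ≤ nM := by
    have h := Nat.floor_le_floor hwN
    rwa [Nat.floor_natCast] at h
  have hx0R : (0:ℝ) ≤ (x:ℝ) := Nat.cast_nonneg _
  have hxR : (x:ℝ) ≤ (nM:ℝ) := by exact_mod_cast hxnM
  by_cases hteq : (x:ℝ) = w
  · apply subset_convexHull
    refine ⟨x, hxnM, hteq.symm, h1, by linarith, h2, by linarith, ?_⟩
    have hmin : u + v ≤ min ((nM:ℝ) + Δ)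
        (min ((nM:ℝ) + (phi nM Δ:ℝ) - x) (2*(nM:ℝ) + Δ - 2*(x:ℝ))) :=
      le_min h4 (le_min (by linarith) (by linarith))
    have hb := hcC x hxnM
    linarith
  · have htpos : (x:ℝ) < w := lt_of_le_of_ne hxle hteq
    have hx1 : x + 1 ≤ nM := by
      have hlt : (x:ℝ) < (nM:ℝ) := lt_of_lt_of_le htpos hwN
      have : x < nM := by exact_mod_cast hlt
      omega
    obtain ⟨t, ht⟩ : ∃ t : ℝ, t = w - x := ⟨_, rfl⟩
    have ht0 : 0 < t := by rw [ht]; linarith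
    have ht1 : t < 1 := by rw [ht]; linarith
    have hx1R : (x:ℝ) + 1 ≤ (nM:ℝ) := by exact_mod_cast hx1
    obtain ⟨C0, hC0def⟩ : ∃ y:ℝ, y = min ((nM:ℝ) + Δ)
        (min ((nM:ℝ) + (phi nM Δ:ℝ) - x) (2*(nM:ℝ) + Δ - 2*(x:ℝ))) := ⟨_, rfl⟩
    obtain ⟨C1, hC1def⟩ : ∃ y:ℝ, y = min ((nM:ℝ) + Δ)
        (min ((nM:ℝ) + (phi nM Δ:ℝ) - ((x:ℝ)+1)) (2*(nM:ℝ) + Δ - 2*((x:ℝ)+1))) := ⟨_, rfl⟩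
    have hbranch : u + v ≤ (1-t) * C0 + t * C1 := by
      by_cases hb1 : x + 1 + Δ ≤ phi nM Δ
      · have hb1R : (x:ℝ) + 1 + Δ ≤ (phi nM Δ:ℝ) := by exact_mod_cast hb1
        have e0 : C0 = (nM:ℝ) + Δ := by
          rw [hC0def]
          exact min_eq_left (le_min (by linarith) (by linarith))
        have e1 : C1 = (nM:ℝ) + Δ := by
          rw [hC1def]
          exact min_eq_left (le_min (by linarith) (by linarith))
        rw [e0, e1]
        have he : (1-t)*((nM:ℝ)+Δ) + t*((nM:ℝ)+Δ) = (nM:ℝ)+Δ := by ring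
        linarith
      · by_cases hb2 : nM + Δ ≤ phi nM Δ + x
        · have hb2R : (nM:ℝ) + Δ ≤ (phi nM Δ:ℝ) + x := by exact_mod_cast hb2
          have e0 : C0 = 2*(nM:ℝ) + Δ - 2*(x:ℝ) := by
            rw [hC0def, min_eq_right (by linarith : 2*(nM:ℝ) + Δ - 2*(x:ℝ) ≤ (nM:ℝ) + (phi nM Δ:ℝ) - x),
              min_eq_right (by linarith)]
          have e1 : C1 = 2*(nM:ℝ) + Δ - 2*((x:ℝ)+1) := by
            rw [hC1def, min_eq_right (by linarith : 2*(nM:ℝ) + Δ - 2*((x:ℝ)+1) ≤ (nM:ℝ) + (phi nM Δ:ℝ) - ((x:ℝ)+1)),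
              min_eq_right (by linarith)]
          rw [e0, e1]
          have he : (1-t)*(2*(nM:ℝ) + Δ - 2*(x:ℝ)) + t*(2*(nM:ℝ) + Δ - 2*((x:ℝ)+1))
              = 2*(nM:ℝ) + Δ - 2*w := by rw [ht]; ring
          linarith
        · have hnb1 : phi nM Δ ≤ x + Δ := by omega
          have hnb2 : phi nM Δ + x + 1 ≤ nM + Δ := by omega
          have hnb1R : (phi nM Δ:ℝ) ≤ (x:ℝ) + Δ := by exact_mod_cast hnb1
          have hnb2R : (phi nM Δ:ℝ) + x + 1 ≤ (nM:ℝ) + Δ := by exact_mod_cast hnb2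
          have e0 : C0 = (nM:ℝ) + (phi nM Δ:ℝ) - x := by
            rw [hC0def, min_eq_left (by linarith : (nM:ℝ) + (phi nM Δ:ℝ) - x ≤ 2*(nM:ℝ) + Δ - 2*(x:ℝ)),
              min_eq_right (by linarith)]
          have e1 : C1 = (nM:ℝ) + (phi nM Δ:ℝ) - ((x:ℝ)+1) := by
            rw [hC1def, min_eq_left (by linarith : (nM:ℝ) + (phi nM Δ:ℝ) - ((x:ℝ)+1) ≤ 2*(nM:ℝ) + Δ - 2*((x:ℝ)+1)),
              min_eq_right (by linarith)]
          rw [e0, e1]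
          have he : (1-t)*((nM:ℝ) + (phi nM Δ:ℝ) - x) + t*((nM:ℝ) + (phi nM Δ:ℝ) - ((x:ℝ)+1))
              = (nM:ℝ) + (phi nM Δ:ℝ) - w := by rw [ht]; ring
          linarith
    have hsplit := split_lemma t ((nM:ℝ) + Δ - x) ((nM:ℝ) + Δ - ((x:ℝ)+1))
        ((nM:ℝ) - x) ((nM:ℝ) - ((x:ℝ)+1)) C0 C1 u v ht0 ht1
        (by rw [hC0def]; exact le_min (by linarith) (le_min (by linarith) (by linarith)))
        (by rw [hC0def]; exact le_min (by linarith) (le_min (by linarith) (by linarith)))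
        (by rw [hC0def]
            exact le_trans (le_trans (min_le_right _ _) (min_le_right _ _)) (by linarith))
        (by rw [hC1def]; exact le_min (by linarith) (le_min (by linarith) (by linarith)))
        (by rw [hC1def]; exact le_min (by linarith) (le_min (by linarith) (by linarith)))
        (by rw [hC1def]
            exact le_trans (le_trans (min_le_right _ _) (min_le_right _ _)) (by linarith))
        h1 h2
        (by have he : (1-t)*((nM:ℝ) + Δ - x) + t*((nM:ℝ) + Δ - ((x:ℝ)+1)) = (nM:ℝ) + Δ - w := by
              rw [ht]; ring
            linarith)
        (by have he : (1-t)*((nM:ℝ) - x) + t*((nM:ℝ) - ((x:ℝ)+1)) = (nM:ℝ) - w := by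
              rw [ht]; ring
            linarith)
        hbranch
    obtain ⟨u0, v0, u1, v1, g1, g2, g3, g4, g5, g6, g7, g8, g9, g10, g11, g12⟩ := hsplit
    have hbb0 := hcC x hxnM
    have hbb1 := hcC (x+1) hx1
    push_cast at hbb1
    have hp0 : ((u0, v0, (x:ℝ)) : ℝ × ℝ × ℝ) ∈
        {r : ℝ × ℝ × ℝ | ∃ x : ℕ, x ≤ nM ∧ r.2.2 = (x : ℝ) ∧
          0 ≤ r.1 ∧ r.1 ≤ (nM : ℝ) + (Δ : ℝ) - (x : ℝ) ∧
          0 ≤ r.2.1 ∧ r.2.1 ≤ (nM : ℝ) - (x : ℝ) ∧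
          r.1 + r.2.1 ≤ 2 * (nM : ℝ) + (Δ : ℝ) - 2 * (x : ℝ) - (rho Δ nM x : ℝ)} := by
      refine ⟨x, hxnM, rfl, g1, g5, g2, g6, ?_⟩
      rw [hC0def] at g9
      linarith
    have hp1 : ((u1, v1, (x:ℝ)+1) : ℝ × ℝ × ℝ) ∈
        {r : ℝ × ℝ × ℝ | ∃ x : ℕ, x ≤ nM ∧ r.2.2 = (x : ℝ) ∧
          0 ≤ r.1 ∧ r.1 ≤ (nM : ℝ) + (Δ : ℝ) - (x : ℝ) ∧
          0 ≤ r.2.1 ∧ r.2.1 ≤ (nM : ℝ) - (x : ℝ) ∧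
          r.1 + r.2.1 ≤ 2 * (nM : ℝ) + (Δ : ℝ) - 2 * (x : ℝ) - (rho Δ nM x : ℝ)} := by
      refine ⟨x + 1, hx1, by push_cast; rfl, g3, ?_, g4, ?_, ?_⟩
      · push_cast; linarith
      · push_cast; linarith
      · push_cast
        rw [hC1def] at g10
        linarith
    have hmem := (convex_convexHull ℝ _) (subset_convexHull ℝ _ hp0)
      (subset_convexHull ℝ _ hp1) (by linarith : (0:ℝ) ≤ 1 - t) (le_of_lt ht0)
      (by ring : (1 - t) + t = 1)
    have hrw : ((u, v, w) : ℝ × ℝ × ℝ)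
        = (1-t) • ((u0, v0, (x:ℝ)) : ℝ × ℝ × ℝ) + t • ((u1, v1, (x:ℝ)+1) : ℝ × ℝ × ℝ) := by
      simp only [Prod.smul_mk, Prod.mk_add_mk, smul_eq_mul, Prod.mk.injEq]
      refine ⟨g11.symm, g12.symm, ?_⟩
      rw [ht]; ring
    rw [hrw]
    exact hmem
end
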